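/- arXiv:1702.08384 — 12 statements merged into one kernel-verified Lean document; each statement's English description precedes it below -/
import Mathlib

section
/- Let V = (F_2)^N and let T ⊆ AGL(V,+) be an elementary abelian regular subgroup with T ≠ T_+ (the usual translation group). Then 1 ≤ dim(U(T)) ≤ N − 2, where U(T) = {v ∈ V | σ_v ∈ T} and σ_v(x) = x + v. -/
/-!
Let `τ_v` be the element of `T` with `τ_v 0 = v` and write `τ_v x = x + B v x + v`.
Commutativity of `T` makes `B` bilinear and symmetric, closure of `T` under composition makes it
associative, and `τ_v² = 1` gives `B v v = 0` in characteristic `2`. Then `U(T) = ker B`.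
The multiplications `B v` are commuting square-zero maps, so they have a common nonzero kernel
vector, which lies in `ker B`. If `ker B` had codimension at most `1`, then `V = ker B + K v` and
the alternating form `B` would vanish, i.e. `T = T₊`.
-/

open Equiv LinearMap Module

namespace Module.End

variable {R M : Type*} [Ring R] [AddCommGroup M] [Module R M]

theorem inf_ker_ne_bot_of_mul_self_eq_zero {f : Module.End R M} (hf : f * f = 0)
    {p : Submodule R M} (hp : p ≠ ⊥) (hfp : p ≤ p.comap f) : p ⊓ ker f ≠ ⊥ := by
  obtain ⟨x, hx, hx0⟩ := Submodule.exists_mem_ne_zero_of_ne_bot hp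
  rw [Submodule.ne_bot_iff]
  by_cases hfx : f x = 0
  · exact ⟨x, ⟨hx, hfx⟩, hx0⟩
  · exact ⟨f x, ⟨hfp hx, by simpa using congr($hf x)⟩, hfx⟩

theorem inf_iInf_ker_ne_bot {ι : Type*} (f : ι → Module.End R M)
    (hcomm : ∀ i j, Commute (f i) (f j)) (hsq : ∀ i, f i * f i = 0) (s : Finset ι)
    {p : Submodule R M} (hp : p ≠ ⊥) (hfp : ∀ i, p ≤ p.comap (f i)) :
    p ⊓ ⨅ i ∈ s, ker (f i) ≠ ⊥ := by
  classical
  induction s using Finset.induction_on generalizing p with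
  | empty => simpa using hp
  | insert j s _ ih =>
    have hker : ∀ i, ker (f j) ≤ (ker (f j)).comap (f i) := fun i x hx => by
      simp only [Submodule.mem_comap, mem_ker] at hx ⊢
      rw [← Module.End.mul_apply, (hcomm j i).eq, Module.End.mul_apply, hx, map_zero]
    rw [Finset.iInf_insert, ← inf_assoc]
    exact ih (inf_ker_ne_bot_of_mul_self_eq_zero (hsq j) hp (hfp j))
      fun i => inf_le_inf (hfp i) (hker i)

end Module.End

namespace LinearMap

variable {K V W : Type*} [Field K] [AddCommGroup V] [Module K V] [AddCommGroup W] [Module K W]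

theorem ker_flip_ne_bot [FiniteDimensional K W] [Nontrivial V] (B : W →ₗ[K] V →ₗ[K] V)
    (hcomm : ∀ v w, Commute (B v) (B w)) (hsq : ∀ w, B w * B w = 0) : ker B.flip ≠ ⊥ := by
  let b := Module.finBasis K W
  have hne := Module.End.inf_iInf_ker_ne_bot (fun i => B (b i)) (fun i j => hcomm _ _)
    (fun i => hsq _) Finset.univ (p := ⊤) top_ne_bot fun _ => le_top
  refine ne_bot_of_le_ne_bot hne fun x hx => ?_
  simp only [top_inf_eq, Finset.mem_univ, iInf_pos, Submodule.mem_iInf, mem_ker] at hx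
  exact mem_ker.2 (b.ext fun i => hx i)

variable {B : V →ₗ[K] V →ₗ[K] V}

theorem ker_ne_bot_of_symm_of_assoc [FiniteDimensional K V] [Nontrivial V]
    (hsymm : ∀ v w, B v w = B w v) (halt : ∀ v, B v v = 0)
    (hassoc : ∀ u v w, B u (B v w) = B (B u v) w) : ker B ≠ ⊥ := by
  have hflip : B.flip = B := ext₂ fun v w => hsymm w v
  rw [← hflip]
  refine ker_flip_ne_bot B (fun v w => ext fun x => ?_) fun v => ext fun x => ?_
  · simp only [Module.End.mul_apply, hassoc, hsymm v w]
  · simp [hassoc, halt]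

theorem finrank_ker_add_two_le [FiniteDimensional K V] (hsymm : ∀ v w, B v w = B w v)
    (halt : ∀ v, B v v = 0) (hB : B ≠ 0) : finrank K (ker B) + 2 ≤ finrank K V := by
  obtain ⟨v, -, hv⟩ := SetLike.exists_of_lt (lt_top_iff_ne_top.2 (mt ker_eq_top.1 hB))
  by_contra! hlt
  have htop : ker B ⊔ Submodule.span K {v} = ⊤ := by
    refine Submodule.eq_top_of_finrank_eq (le_antisymm (Submodule.finrank_le _) ?_)
    rw [Submodule.finrank_sup_span_singleton hv]
    omega
  -- `B v` kills `ker B` by symmetry and `v` because `B` is alternating.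
  have hker : ker B ⊔ Submodule.span K {v} ≤ ker (B v) :=
    sup_le (fun u hu => by simp [mem_ker, hsymm v u, mem_ker.1 hu])
      ((Submodule.span_singleton_le_iff_mem _ _).2 (halt v))
  exact hv (ker_eq_top.1 (top_le_iff.1 (htop ▸ hker)))

end LinearMap

section Circle

variable {R V : Type*} [CommRing R] [AddCommGroup V] [Module R V]

-- `g ∈ T` is the right multiplication `x ↦ x ∘ g 0` for the circle operation
-- `x ∘ v = x + B v x + v` of the algebra `(V, +, B)`.
def IsCircleProduct (T : Subgroup (Perm V)) (B : V →ₗ[R] V →ₗ[R] V) : Prop :=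
  ∀ g ∈ T, ∀ x, g x = x + B (g 0) x + g 0

theorem exists_isCircleProduct {T : Subgroup (Perm V)}
    (haff : ∀ g ∈ T, ∃ (L : V ≃ₗ[R] V) (c : V), ∀ x, g x = L x + c)
    (hreg : ∀ x y : V, ∃! g : Perm V, g ∈ T ∧ g x = y)
    (hab : ∀ g ∈ T, ∀ h ∈ T, g * h = h * g) :
    ∃ B : V →ₗ[R] V →ₗ[R] V, IsCircleProduct T B := by
  choose τ hτ hτ_unique using fun v => hreg 0 v
  have heq : ∀ g ∈ T, τ (g 0) = g := fun g hg => (hτ_unique (g 0) g ⟨hg, rfl⟩).symm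
  have hlin : ∀ v, ∃ A : V →ₗ[R] V, ∀ x, τ v x = x + A x + v := fun v => by
    obtain ⟨L, c, hL⟩ := haff (τ v) (hτ v).1
    have hc : c = v := by simpa [(hτ v).2] using (hL 0).symm
    exact ⟨L.toLinearMap - LinearMap.id, fun x => by simp [hL, hc]⟩
  choose A hA using hlin
  have hsymm : ∀ v w, A v w = A w v := fun v w => by
    have := congr($(hab _ (hτ v).1 _ (hτ w).1) 0)
    simp only [Perm.mul_apply, (hτ _).2, hA] at this
    linear_combination (norm := module) this
  -- linearity in the first argument comes from the symmetry `hsymm`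
  refine ⟨LinearMap.mk₂ R (fun v x => A v x) (fun v v' x => ?_) (fun c v x => ?_)
    (fun v x x' => map_add _ _ _) (fun c v x => map_smul _ _ _), fun g hg x => ?_⟩
  · simp only [hsymm _ x, map_add]
  · simp only [hsymm _ x, map_smul]
  · simp [← hA, heq g hg]

namespace IsCircleProduct

variable {T : Subgroup (Perm V)} {B : V →ₗ[R] V →ₗ[R] V} (hB : IsCircleProduct T B)
  (hsurj : ∀ v, ∃ g ∈ T, g 0 = v)
include hB hsurj

theorem symm (hab : ∀ g ∈ T, ∀ h ∈ T, g * h = h * g) (v w : V) : B v w = B w v := by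
  obtain ⟨g, hg, rfl⟩ := hsurj v
  obtain ⟨h, hh, rfl⟩ := hsurj w
  have := congr($(hab g hg h hh) 0)
  rw [Perm.mul_apply, Perm.mul_apply, hB g hg (h 0), hB h hh (g 0)] at this
  linear_combination (norm := module) this

theorem assoc (u v w : V) : B u (B v w) = B (B u v) w := by
  obtain ⟨g, hg, rfl⟩ := hsurj u
  obtain ⟨h, hh, rfl⟩ := hsurj v
  have := hB (g * h) (mul_mem hg hh) w
  rw [Perm.mul_apply, Perm.mul_apply, hB g hg, hB h hh w, hB g hg (h 0)] at this
  simp only [map_add, LinearMap.add_apply] at this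
  linear_combination (norm := module) this

theorem apply_self [CharP R 2] (helem : ∀ g ∈ T, g * g = 1) (v : V) : B v v = 0 := by
  obtain ⟨g, hg, rfl⟩ := hsurj v
  have hgg : g (g 0) = 0 := by rw [← Perm.mul_apply, helem g hg, Perm.one_apply]
  rw [hB g hg (g 0)] at hgg
  have h2 : (2 : R) • g 0 = 0 := by rw [CharTwo.two_eq_zero, zero_smul]
  linear_combination (norm := module) hgg - h2

theorem addRight_mem_iff (v : V) : (Equiv.addRight v : Perm V) ∈ T ↔ B v = 0 := by
  constructor
  · intro hv
    ext x
    simpa using hB _ hv x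
  · intro hv
    obtain ⟨g, hg, rfl⟩ := hsurj v
    convert hg
    ext x
    simp [hB g hg x, hv]

theorem coe_eq_range_addRight_iff :
    (T : Set (Perm V)) = Set.range (fun v : V => (Equiv.addRight v : Perm V)) ↔ B = 0 := by
  constructor
  · intro hT
    ext v : 1
    exact (hB.addRight_mem_iff hsurj v).1 (by rw [← SetLike.mem_coe, hT]; exact ⟨v, rfl⟩)
  · intro h
    ext g
    constructor
    · intro hg
      exact ⟨g 0, by ext x; simp [hB g hg x, h]⟩
    · rintro ⟨v, rfl⟩
      exact (hB.addRight_mem_iff hsurj v).2 (by simp [h])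

end IsCircleProduct

end Circle

/-- If `T ⊆ AGL(V,+)` is an elementary abelian regular subgroup with
`T ≠ T₊`, then `U(T) = {v | σ_v ∈ T}` is a subspace of dimension between `1` and `N - 2`. -/
theorem stmt1 (N : ℕ)
    (T : Subgroup (Equiv.Perm (Fin N → ZMod 2)))
    (haff : ∀ g ∈ T, ∃ (L : (Fin N → ZMod 2) ≃ₗ[ZMod 2] (Fin N → ZMod 2))
      (c : Fin N → ZMod 2), ∀ x, g x = L x + c)
    (hreg : ∀ x y : Fin N → ZMod 2,
      ∃! g : Equiv.Perm (Fin N → ZMod 2), g ∈ T ∧ g x = y)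
    (hab : ∀ g ∈ T, ∀ h ∈ T, g * h = h * g)
    (helem : ∀ g ∈ T, g * g = 1)
    (hne : (T : Set (Equiv.Perm (Fin N → ZMod 2)))
      ≠ Set.range (fun v : Fin N → ZMod 2 =>
          (Equiv.addRight v : Equiv.Perm (Fin N → ZMod 2)))) :
    ∃ U : Submodule (ZMod 2) (Fin N → ZMod 2),
      (U : Set (Fin N → ZMod 2))
        = {v : Fin N → ZMod 2 |
            (Equiv.addRight v : Equiv.Perm (Fin N → ZMod 2)) ∈ T} ∧
      1 ≤ Module.finrank (ZMod 2) U ∧ Module.finrank (ZMod 2) U ≤ N - 2 := by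
  obtain ⟨B, hB⟩ := exists_isCircleProduct haff hreg hab
  have hsurj : ∀ v, ∃ g ∈ T, g 0 = v := fun v => (hreg 0 v).exists
  have hsymm := hB.symm hsurj hab
  have halt := hB.apply_self hsurj helem
  have hB0 : B ≠ 0 := fun h => hne ((hB.coe_eq_range_addRight_iff hsurj).2 h)
  have hdim := finrank_ker_add_two_le hsymm halt hB0
  have : Nontrivial (Fin N → ZMod 2) := Module.nontrivial_of_finrank_pos (R := ZMod 2) (by omega)
  rw [Module.finrank_fin_fun] at hdim
  refine ⟨ker B, ?_, ?_, by omega⟩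
  · ext v
    exact (hB.addRight_mem_iff hsurj v).symm
  · exact Submodule.one_le_finrank_iff.2 (ker_ne_bot_of_symm_of_assoc hsymm halt (hB.assoc hsurj))
end

section
/- Let N = n + d, V = (F_2)^N, n ≥ 2, d ≥ 1, and let T_∘ ⊆ AGL(V,+) be an elementary abelian regular subgroup with U(T_∘) = Span{e_{n+1},…,e_{n+d}}. Then T_+ ⊆ AGL(V,∘) if and only if for every y ∈ V the linear part κ_y of τ_y has block form [[I_n, B_y],[0, I_d]] for some n×d matrix B_y over F_2. -/
/-!
Write `x ∘ a = τ a x`. Regularity, commutativity and exponent two of `T` make `∘` an elementary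
abelian group law on `V`, and `a ↦ κ a` a homomorphism from `(V, ∘)` onto commuting involutions.
An affine map of `(V, ∘)` sending `x` to `x + v` must have `∘`-linear part `κ v`, and `κ v` is
`∘`-linear exactly when `κ (κ v b) = κ b` for all `b`. Since `κ a = κ b` iff `a + b ∈ U(T_∘)`,
`T₊ ⊆ AGL(V, ∘)` iff every `κ y + 1` maps `V` into `U(T_∘)`; as `κ y` also fixes `U(T_∘)`
pointwise, this is the block form.
-/

open Matrix

/-- The upper unitriangular block matrix `[[I_n, B],[0, I_d]]` as an `(n+d) × (n+d)` matrix. -/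
def blockUT (n d : ℕ) (B : Matrix (Fin n) (Fin d) (ZMod 2)) :
    Matrix (Fin (n + d)) (Fin (n + d)) (ZMod 2) :=
  (Matrix.fromBlocks 1 B 0 1).submatrix finSumFinEquiv.symm finSumFinEquiv.symm

section BlockUT

variable {n d : ℕ}

lemma vecMul_blockUT_apply_of_lt (B : Matrix (Fin n) (Fin d) (ZMod 2))
    (x : Fin (n + d) → ZMod 2) (i : Fin (n + d)) (hi : (i : ℕ) < n) :
    (x ᵥ* blockUT n d B) i = x i := by
  obtain ⟨i, rfl⟩ : ∃ i' : Fin n, Fin.castAdd d i' = i := ⟨⟨i, hi⟩, rfl⟩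
  simp [blockUT, vecMul, dotProduct, Fin.sum_univ_add, one_apply]

lemma exists_blockUT_iff (f : (Fin (n + d) → ZMod 2) →ₗ[ZMod 2] (Fin (n + d) → ZMod 2))
    (hf : ∀ u : Fin (n + d) → ZMod 2, (∀ i : Fin (n + d), (i : ℕ) < n → u i = 0) → f u = u) :
    (∃ B : Matrix (Fin n) (Fin d) (ZMod 2), ∀ x, f x = x ᵥ* blockUT n d B) ↔
      ∀ x (i : Fin (n + d)), (i : ℕ) < n → f x i = x i := by
  refine ⟨fun ⟨B, hB⟩ x i hi => hB x ▸ vecMul_blockUT_apply_of_lt B x i hi, fun hfix => ?_⟩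
  set B : Matrix (Fin n) (Fin d) (ZMod 2) :=
    Matrix.of fun i j => f (Pi.single (Fin.castAdd d i) 1) (Fin.natAdd n j)
  suffices hB : (LinearMap.toMatrix' f)ᵀ = blockUT n d B from
    ⟨B, fun x => by rw [← hB, vecMul_transpose, LinearMap.toMatrix'_mulVec]⟩
  have hsingle (j : Fin d) : f (Pi.single (Fin.natAdd n j) 1) = Pi.single (Fin.natAdd n j) 1 :=
    hf _ fun i hi => Pi.single_eq_of_ne (fun h => by simp [h] at hi) 1
  ext i j
  refine Fin.addCases (fun i => ?_) (fun i => ?_) i <;>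
    refine Fin.addCases (fun j => ?_) (fun j => ?_) j
  · simp [blockUT, hfix _ (Fin.castAdd d j) j.isLt, Pi.single_apply, one_apply, eq_comm]
  · simp [blockUT, B]
  · simp [blockUT, hsingle, Pi.single_apply, Fin.ext_iff]
    omega
  · simp [blockUT, hsingle, Pi.single_apply, one_apply, eq_comm]

end BlockUT

section Translations

variable {V : Type*} [AddCommGroup V] [Module (ZMod 2) V]

/-- `τ a` is the translation `x ↦ x ∘ a` of an elementary abelian group structure `(V, ∘)` with
identity `0`, and `κ a` is its linear part with respect to `+`. -/
structure IsElemAbelianTranslation (τ : V → Equiv.Perm V) (κ : V → V ≃ₗ[ZMod 2] V) : Prop where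
  apply_zero : ∀ a, τ a 0 = a
  mul_eq : ∀ a b, τ a * τ b = τ (τ a b)
  apply_comm : ∀ a b, τ a b = τ b a
  apply_self : ∀ a, τ a a = 0
  apply_eq : ∀ a x, τ a x = κ a x + a

/-- The paper's `U(T_∘)`. -/
def coincidentTranslations (τ : V → Equiv.Perm V) : Set V := {v | ∀ x, τ v x = x + v}

namespace IsElemAbelianTranslation

variable {τ : V → Equiv.Perm V} {κ : V → V ≃ₗ[ZMod 2] V}

theorem of_subgroup (T : Subgroup (Equiv.Perm V)) (hreg : ∀ y, ∃! g, g ∈ T ∧ g 0 = y)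
    (hab : ∀ g ∈ T, ∀ h ∈ T, g * h = h * g) (helem : ∀ g ∈ T, g * g = 1)
    (hτmem : ∀ a, τ a ∈ T) (hτ0 : ∀ a, τ a 0 = a) (hκ : ∀ a x, τ a x = κ a x + a) :
    IsElemAbelianTranslation τ κ where
  apply_zero := hτ0
  mul_eq a b := (hreg (τ a b)).unique ⟨T.mul_mem (hτmem a) (hτmem b), by simp [hτ0]⟩
    ⟨hτmem _, hτ0 _⟩
  apply_comm a b := by simpa [hτ0] using congr($(hab _ (hτmem a) _ (hτmem b)) 0)
  apply_self a := by simpa [hτ0] using congr($(helem _ (hτmem a)) 0)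
  apply_eq := hκ

variable (h : IsElemAbelianTranslation τ κ)
include h

theorem apply_apply (a b x : V) : τ a (τ b x) = τ (τ a b) x := by
  rw [← Equiv.Perm.mul_apply, h.mul_eq]

theorem zero_apply (x : V) : τ 0 x = x := by
  rw [h.apply_comm, h.apply_zero]

theorem apply_apply_self (a x : V) : τ a (τ a x) = x := by
  rw [h.apply_apply, h.apply_self, h.zero_apply]

theorem linear_zero_apply (x : V) : κ 0 x = x := by
  simpa [h.zero_apply] using (h.apply_eq 0 x).symm

theorem linear_apply_self (a : V) : κ a a = a := by
  have h0 := h.apply_eq a a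
  rw [h.apply_self] at h0
  exact (eq_neg_of_add_eq_zero_left h0.symm).trans (ZModModule.neg_eq_self a)

theorem linear_apply_eq (a b x : V) : κ (τ a b) x = κ a (κ b x) := by
  have h0 := h.apply_apply a b x
  rw [h.apply_eq b, h.apply_eq a, map_add, h.apply_eq (τ a b), h.apply_eq a b, add_assoc] at h0
  rw [h.apply_eq a b]
  exact (add_right_cancel h0).symm

theorem linear_comm (a b x : V) : κ a (κ b x) = κ b (κ a x) := by
  rw [← h.linear_apply_eq, ← h.linear_apply_eq, h.apply_comm]

theorem linear_linear_self (a x : V) : κ a (κ a x) = x := by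
  rw [← h.linear_apply_eq, h.apply_self, h.linear_zero_apply]

theorem linear_apply_of_mem {u : V} (hu : u ∈ coincidentTranslations τ) (y : V) : κ y u = u := by
  have h0 := hu y
  rw [h.apply_comm, h.apply_eq, add_comm y] at h0
  exact add_right_cancel h0

theorem linear_eq_iff (a b : V) : κ a = κ b ↔ a + b ∈ coincidentTranslations τ := by
  constructor
  · intro hab x
    have hba : τ b a = a + b := by rw [h.apply_eq, ← hab, h.linear_apply_self]
    rw [← hba, ← h.apply_apply, h.apply_eq b, h.apply_eq a, map_add, ← hab, h.linear_linear_self,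
      h.linear_apply_self, add_assoc, hba]
  · intro hu
    have hκu : ∀ x, κ (a + b) x = x := fun x => add_right_cancel ((h.apply_eq _ x).symm.trans (hu x))
    have hub : τ (a + b) b = a := by rw [hu, add_left_comm, ZModModule.add_self, add_zero]
    ext x
    rw [← hub, h.linear_apply_eq, hκu]

theorem linear_map_apply_iff (v : V) :
    (∀ a b, κ v (τ b a) = τ (κ v b) (κ v a)) ↔ ∀ b, κ (κ v b) = κ b := by
  calc (∀ a b, κ v (τ b a) = τ (κ v b) (κ v a))
      ↔ ∀ b a, κ (κ v b) (κ v a) = κ b (κ v a) := by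
        rw [forall_comm]
        refine forall₂_congr fun b a => ?_
        rw [h.apply_eq, h.apply_eq, map_add, add_left_inj, h.linear_comm, eq_comm]
    _ ↔ ∀ b, κ (κ v b) = κ b :=
        forall_congr' fun b => (κ v).surjective.forall.symm.trans LinearEquiv.ext_iff.symm

theorem exists_affine_iff (v : V) :
    (∃ L : Equiv.Perm V, (∀ a b, L (τ b a) = τ (L b) (L a)) ∧ ∃ c, ∀ x, x + v = τ c (L x)) ↔
      ∀ a b, κ v (τ b a) = τ (κ v b) (κ v a) := by
  refine ⟨fun ⟨L, hL, c, hc⟩ => ?_, fun hv => ⟨(κ v).toEquiv, hv, v, fun x => ?_⟩⟩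
  · have hL0 : L 0 = 0 := by simpa [h.apply_zero, h.apply_self] using hL 0 0
    obtain rfl : c = v := by simpa [hL0, h.apply_zero] using (hc 0).symm
    have hLκ : ⇑L = κ c := funext fun x => calc
      L x = τ c (τ c (L x)) := (h.apply_apply_self c _).symm
      _ = κ c x := by
        rw [← hc, h.apply_eq, map_add, h.linear_apply_self, add_assoc, ZModModule.add_self,
          add_zero]
    simpa only [hLκ] using hL
  · simp [h.apply_eq, h.linear_linear_self]

theorem forall_exists_affine_iff :
    (∀ v, ∃ L : Equiv.Perm V, (∀ a b, L (τ b a) = τ (L b) (L a)) ∧ ∃ c, ∀ x, x + v = τ c (L x)) ↔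
      ∀ y x, κ y x + x ∈ coincidentTranslations τ :=
  forall_congr' fun v => (h.exists_affine_iff v).trans <| (h.linear_map_apply_iff v).trans <|
    forall_congr' fun _ => h.linear_eq_iff _ _

end IsElemAbelianTranslation

end Translations

theorem stmt3_general (n d : ℕ)
    (T : Subgroup (Equiv.Perm (Fin (n + d) → ZMod 2)))
    (hreg : ∀ x y : Fin (n + d) → ZMod 2,
      ∃! g : Equiv.Perm (Fin (n + d) → ZMod 2), g ∈ T ∧ g x = y)
    (hab : ∀ g ∈ T, ∀ h ∈ T, g * h = h * g)
    (helem : ∀ g ∈ T, g * g = 1)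
    (τ : (Fin (n + d) → ZMod 2) → Equiv.Perm (Fin (n + d) → ZMod 2))
    (hτmem : ∀ a, τ a ∈ T) (hτ0 : ∀ a, τ a 0 = a)
    (κ : (Fin (n + d) → ZMod 2) →
      ((Fin (n + d) → ZMod 2) ≃ₗ[ZMod 2] (Fin (n + d) → ZMod 2)))
    (hκ : ∀ y x, τ y x = κ y x + y)
    (hU : ∀ v : Fin (n + d) → ZMod 2,
      (∀ x, τ v x = x + v) ↔ (∀ i : Fin (n + d), (i : ℕ) < n → v i = 0)) :
    ((∀ v : Fin (n + d) → ZMod 2, ∃ L : Equiv.Perm (Fin (n + d) → ZMod 2),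
        (∀ a b, L (τ b a) = τ (L b) (L a)) ∧ ∃ c, ∀ x, x + v = τ c (L x))
      ↔ (∀ y : Fin (n + d) → ZMod 2, ∃ B : Matrix (Fin n) (Fin d) (ZMod 2),
          ∀ x, κ y x = x ᵥ* blockUT n d B)) := by
  have hτ := IsElemAbelianTranslation.of_subgroup T (hreg 0) hab helem hτmem hτ0 hκ
  have hU' : ∀ v, v ∈ coincidentTranslations τ ↔ ∀ i : Fin (n + d), (i : ℕ) < n → v i = 0 := hU
  rw [hτ.forall_exists_affine_iff]
  refine forall_congr' fun y => ?_
  refine Iff.trans ?_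
    (exists_blockUT_iff (κ y).toLinearMap fun u hu => hτ.linear_apply_of_mem ((hU' u).2 hu) y).symm
  simp only [hU', Pi.add_apply, CharTwo.add_eq_zero, LinearEquiv.coe_coe]

/-- For an elementary abelian regular `T∘ ⊆ AGL(V,+)` with
`U(T∘) = Span{e_{n+1},…,e_{n+d}}`, one has `T₊ ⊆ AGL(V,∘)` iff every linear part `κ_y`
has block form `[[I_n, B_y],[0, I_d]]`.  (Here `x ∘ a = τ_a x`, maps act on row vectors
on the right, and a permutation is `∘`-affine when it is a `∘`-linear bijection followed
by a `∘`-translation.) -/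
theorem stmt3 (n d : ℕ) (hn : 2 ≤ n) (hd : 1 ≤ d)
    (T : Subgroup (Equiv.Perm (Fin (n + d) → ZMod 2)))
    (haff : ∀ g ∈ T, ∃ (L : (Fin (n + d) → ZMod 2) ≃ₗ[ZMod 2] (Fin (n + d) → ZMod 2))
      (c : Fin (n + d) → ZMod 2), ∀ x, g x = L x + c)
    (hreg : ∀ x y : Fin (n + d) → ZMod 2,
      ∃! g : Equiv.Perm (Fin (n + d) → ZMod 2), g ∈ T ∧ g x = y)
    (hab : ∀ g ∈ T, ∀ h ∈ T, g * h = h * g)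
    (helem : ∀ g ∈ T, g * g = 1)
    (τ : (Fin (n + d) → ZMod 2) → Equiv.Perm (Fin (n + d) → ZMod 2))
    (hτmem : ∀ a, τ a ∈ T) (hτ0 : ∀ a, τ a 0 = a)
    (κ : (Fin (n + d) → ZMod 2) →
      ((Fin (n + d) → ZMod 2) ≃ₗ[ZMod 2] (Fin (n + d) → ZMod 2)))
    (hκ : ∀ y x, τ y x = κ y x + y)
    (hU : ∀ v : Fin (n + d) → ZMod 2,
      (∀ x, τ v x = x + v) ↔ (∀ i : Fin (n + d), (i : ℕ) < n → v i = 0)) :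
    ((∀ v : Fin (n + d) → ZMod 2, ∃ L : Equiv.Perm (Fin (n + d) → ZMod 2),
        (∀ a b, L (τ b a) = τ (L b) (L a)) ∧ ∃ c, ∀ x, x + v = τ c (L x))
      ↔ (∀ y : Fin (n + d) → ZMod 2, ∃ B : Matrix (Fin n) (Fin d) (ZMod 2),
          ∀ x, κ y x = x ᵥ* blockUT n d B)) :=
  stmt3_general n d T hreg hab helem τ hτmem hτ0 κ hκ hU
end

section
/- With κ_y = [[I_n, B_y],[0, I_d]] as in the structure theorem for practical hidden sums with U(T_∘) = Span{e_{n+1},…,e_{n+d}}, for every v = (v_1,…,v_{n+d}) ∈ V one has B_v = Σ_{i=1}^n v_i B_{e_i}; in particular κ_v depends only on the first n coordinates of v. -/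
/-! Since `T` acts regularly, `τ a * τ b = τ (τ a b)`, so `v ↦ B v` sends `τ a b` to `B a + B b`.
Translations by vectors of `U(T_∘)` have trivial block, so `B` is invariant under adding such
vectors; and `τ a b ≡ a + b` modulo `U(T_∘)` because `κ_a` fixes the first `n` coordinates.
Hence `B` is additive, i.e. `𝔽₂`-linear, and it vanishes on `e_{n+1}, …, e_{n+d}`. -/

open Matrix

open Equiv

section BlockUT

variable {n d : ℕ}

lemma blockUT_injective : Function.Injective (blockUT n d) := by
  intro B C h
  ext i j
  simpa [blockUT] using congrFun (congrFun h (Fin.castAdd d i)) (Fin.natAdd n j)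

lemma blockUT_mul_blockUT (B C : Matrix (Fin n) (Fin d) (ZMod 2)) :
    blockUT n d B * blockUT n d C = blockUT n d (B + C) := by
  rw [blockUT, blockUT, submatrix_mul_equiv, fromBlocks_multiply]
  simp [blockUT, add_comm]

lemma blockUT_zero : blockUT n d 0 = 1 := by
  rw [blockUT, fromBlocks_one, submatrix_one_equiv]

lemma vecMul_blockUT_castAdd (B : Matrix (Fin n) (Fin d) (ZMod 2))
    (x : Fin (n + d) → ZMod 2) (i : Fin n) :
    (x ᵥ* blockUT n d B) (Fin.castAdd d i) = x (Fin.castAdd d i) := by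
  rw [vecMul, dotProduct, ← finSumFinEquiv.sum_comp, Fintype.sum_sum_type]
  simp [blockUT, one_apply]

end BlockUT

lemma mul_eq_of_free {V : Type*} {T : Subgroup (Perm V)} {o : V}
    (hfree : ∀ g ∈ T, ∀ h ∈ T, g o = h o → g = h) {τ : V → Perm V}
    (hτmem : ∀ a, τ a ∈ T) (hτo : ∀ a, τ a o = a) (a b : V) :
    τ a * τ b = τ (τ a b) :=
  hfree _ (T.mul_mem (hτmem a) (hτmem b)) _ (hτmem _) (by simp [hτo])

lemma LinearMap.apply_eq_sum_castAdd {R M : Type*} [CommSemiring R] [AddCommMonoid M]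
    [Module R M] {n d : ℕ} (f : (Fin (n + d) → R) →ₗ[R] M)
    (hf : ∀ j : Fin d, f (Pi.single (Fin.natAdd n j) 1) = 0) (v : Fin (n + d) → R) :
    f v = ∑ i : Fin n, v (Fin.castAdd d i) • f (Pi.single (Fin.castAdd d i) 1) := by
  conv_lhs => rw [pi_eq_sum_univ' v, map_sum]
  simp [Fin.sum_univ_add, hf]

section Translations

variable {n d : ℕ} {τ : (Fin (n + d) → ZMod 2) → Perm (Fin (n + d) → ZMod 2)}
  {B : (Fin (n + d) → ZMod 2) → Matrix (Fin n) (Fin d) (ZMod 2)}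

lemma block_apply_eq_add_of_mul_eq (hB : ∀ v x, τ v x = x ᵥ* blockUT n d (B v) + v)
    {a b : Fin (n + d) → ZMod 2} (hmul : τ a * τ b = τ (τ a b)) : B (τ a b) = B a + B b := by
  refine (blockUT_injective (ext_iff_vecMul.2 fun x => ?_)).trans (add_comm _ _)
  have h := congr($hmul x)
  rw [Perm.mul_apply, hB b x, hB a, hB (τ a b) x, add_vecMul, vecMul_vecMul,
    blockUT_mul_blockUT, add_assoc, ← hB a b] at h
  exact (add_right_cancel h).symm

lemma block_eq_zero_of_translation (hB : ∀ v x, τ v x = x ᵥ* blockUT n d (B v) + v)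
    {c : Fin (n + d) → ZMod 2} (hc : ∀ x, τ c x = x + c) : B c = 0 := by
  refine blockUT_injective (ext_iff_vecMul.2 fun x => ?_)
  rw [blockUT_zero, vecMul_one]
  exact add_right_cancel ((hB c x).symm.trans (hc x))

lemma add_sub_apply_of_lt (hB : ∀ v x, τ v x = x ᵥ* blockUT n d (B v) + v)
    (a b : Fin (n + d) → ZMod 2) {i : Fin (n + d)} (hi : (i : ℕ) < n) :
    (a + b - τ a b) i = 0 := by
  obtain ⟨i, rfl⟩ : ∃ j : Fin n, Fin.castAdd d j = i := ⟨⟨i, hi⟩, rfl⟩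
  simp [hB, vecMul_blockUT_castAdd, add_comm]

end Translations

theorem stmt5_general (n d : ℕ)
    (T : Subgroup (Equiv.Perm (Fin (n + d) → ZMod 2)))
    (hreg : ∀ x y : Fin (n + d) → ZMod 2,
      ∃! g : Equiv.Perm (Fin (n + d) → ZMod 2), g ∈ T ∧ g x = y)
    (τ : (Fin (n + d) → ZMod 2) → Equiv.Perm (Fin (n + d) → ZMod 2))
    (hτmem : ∀ a, τ a ∈ T) (hτ0 : ∀ a, τ a 0 = a)
    (B : (Fin (n + d) → ZMod 2) → Matrix (Fin n) (Fin d) (ZMod 2))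
    (hB : ∀ v x, τ v x = x ᵥ* blockUT n d (B v) + v)
    (hU : ∀ v : Fin (n + d) → ZMod 2,
      (∀ x, τ v x = x + v) ↔ (∀ i : Fin (n + d), (i : ℕ) < n → v i = 0)) :
    ∀ v : Fin (n + d) → ZMod 2,
      B v = ∑ i : Fin n,
        v (Fin.castAdd d i) • B (Pi.single (Fin.castAdd d i) (1 : ZMod 2)) ∧
      ∀ w : Fin (n + d) → ZMod 2,
        (∀ i : Fin n, v (Fin.castAdd d i) = w (Fin.castAdd d i)) → B v = B w := by
  have hmul : ∀ a b, τ a * τ b = τ (τ a b) :=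
    mul_eq_of_free (fun g hg h hh hgh => (hreg 0 (g 0)).unique ⟨hg, rfl⟩ ⟨hh, hgh.symm⟩)
      hτmem hτ0
  have hshift : ∀ w c, (∀ i : Fin (n + d), (i : ℕ) < n → c i = 0) → B (w + c) = B w := by
    intro w c hc
    rw [← (hU c).2 hc w, block_apply_eq_add_of_mul_eq hB (hmul c w),
      block_eq_zero_of_translation hB ((hU c).2 hc), zero_add]
  have hadd : ∀ a b, B (a + b) = B a + B b := fun a b => by
    rw [← add_sub_cancel (τ a b) (a + b), hshift _ _ fun i => add_sub_apply_of_lt hB a b,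
      block_apply_eq_add_of_mul_eq hB (hmul a b)]
  have hsum : ∀ v, B v = ∑ i : Fin n,
      v (Fin.castAdd d i) • B (Pi.single (Fin.castAdd d i) (1 : ZMod 2)) :=
    ((AddMonoidHom.mk' B hadd).toZModLinearMap 2).apply_eq_sum_castAdd fun j =>
      block_eq_zero_of_translation hB <| (hU _).2 fun i hi =>
        Pi.single_eq_of_ne (Fin.ne_of_val_ne (by rw [Fin.val_natAdd]; omega)) _
  intro v
  refine ⟨hsum v, fun w hw => ?_⟩
  simp only [hsum v, hsum w, hw]

/-- With `κ_v = [[I_n, B_v],[0, I_d]]` as in the structure theorem,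
`B_v = Σ_{i=1}^n v_i B_{e_i}`; in particular `κ_v` (i.e. `B_v`) depends only on the
first `n` coordinates of `v`. -/
theorem stmt5 (n d : ℕ) (hn : 2 ≤ n) (hd : 1 ≤ d)
    (T : Subgroup (Equiv.Perm (Fin (n + d) → ZMod 2)))
    (haff : ∀ g ∈ T, ∃ (L : (Fin (n + d) → ZMod 2) ≃ₗ[ZMod 2] (Fin (n + d) → ZMod 2))
      (c : Fin (n + d) → ZMod 2), ∀ x, g x = L x + c)
    (hreg : ∀ x y : Fin (n + d) → ZMod 2,
      ∃! g : Equiv.Perm (Fin (n + d) → ZMod 2), g ∈ T ∧ g x = y)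
    (hab : ∀ g ∈ T, ∀ h ∈ T, g * h = h * g)
    (helem : ∀ g ∈ T, g * g = 1)
    (τ : (Fin (n + d) → ZMod 2) → Equiv.Perm (Fin (n + d) → ZMod 2))
    (hτmem : ∀ a, τ a ∈ T) (hτ0 : ∀ a, τ a 0 = a)
    (B : (Fin (n + d) → ZMod 2) → Matrix (Fin n) (Fin d) (ZMod 2))
    (hB : ∀ v x, τ v x = x ᵥ* blockUT n d (B v) + v)
    (hU : ∀ v : Fin (n + d) → ZMod 2,
      (∀ x, τ v x = x + v) ↔ (∀ i : Fin (n + d), (i : ℕ) < n → v i = 0)) :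
    ∀ v : Fin (n + d) → ZMod 2,
      B v = ∑ i : Fin n,
        v (Fin.castAdd d i) • B (Pi.single (Fin.castAdd d i) (1 : ZMod 2)) ∧
      ∀ w : Fin (n + d) → ZMod 2,
        (∀ i : Fin n, v (Fin.castAdd d i) = w (Fin.castAdd d i)) → B v = B w :=
  stmt5_general n d T hreg τ hτmem hτ0 B hB hU
end

section
/- Let T_∘ be a practical hidden sum on V = (F_2)^{n+d} with U(T_∘) = Span{e_{n+1},…,e_{n+d}} and matrices B_{e_1},…,B_{e_n} as in the structure theorem. Define the n×n matrix 𝔅_∘ over F_{2^d} whose (i,j) entry is the j-th row of B_{e_i} viewed as an element of F_{2^d}. Then 𝔅_∘ is symmetric with zero diagonal, and the dimension condition dim U(T_∘) = d is equivalent to 𝔅_∘ being full rank over F_2 (viewed as an n × nd binary matrix). -/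
/-!
Evaluating `τ_u τ_v = τ_v τ_u` and `τ_u τ_u = 1` at `0` and reading off the last `d`
coordinates gives `v' B_u = u' B_v` and `u' B_u = 0`, where `u'` is the vector of the first `n`
coordinates of `u`. For `u, v` basis vectors these are the symmetry and the zero diagonal of `𝔅`;
for `u = e_j` alone, combined with that symmetry, the first one gives `B_v = ∑ i, v_i • B_{e_i}`.
Since `τ_v` is the plain translation by `v` exactly when `B_v = 0`, `U(T)` is the set of `v` whose
first `n` coordinates give a vanishing combination of the `B_{e_i}`, and it consists of the
vectors supported on the last `d` coordinates iff the `B_{e_i}` are linearly independent.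
-/

open Matrix

section CastAdd

variable {n d : ℕ} {α : Type*} [Zero α]

theorem Pi.single_castAdd_comp_castAdd (i : Fin n) (c : α) :
    (Pi.single (Fin.castAdd d i) c : Fin (n + d) → α) ∘ Fin.castAdd d = Pi.single i c :=
  Function.update_comp_eq_of_injective _ (Fin.castAdd_injective n d) i c

theorem Pi.single_castAdd_comp_natAdd (i : Fin n) (c : α) :
    (Pi.single (Fin.castAdd d i) c : Fin (n + d) → α) ∘ Fin.natAdd n = 0 := by
  ext k
  simp only [Function.comp_apply, Pi.single_apply, Fin.ext_iff, Fin.val_natAdd, Fin.val_castAdd,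
    Pi.zero_apply, ite_eq_right_iff]
  omega

theorem comp_castAdd_eq_zero_iff {v : Fin (n + d) → α} :
    v ∘ Fin.castAdd d = 0 ↔ ∀ i : Fin (n + d), (i : ℕ) < n → v i = 0 :=
  ⟨fun h i hi => congrFun h ⟨i, hi⟩, fun h => funext fun i => h _ i.isLt⟩

end CastAdd

namespace blockUT

variable {n d : ℕ} {A : Matrix (Fin n) (Fin d) (ZMod 2)}

theorem zero : blockUT n d 0 = 1 := by
  rw [blockUT, fromBlocks_one, submatrix_one_equiv]

theorem vecMul_comp_natAdd (x : Fin (n + d) → ZMod 2) :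
    (x ᵥ* blockUT n d A) ∘ Fin.natAdd n = x ∘ Fin.natAdd n + (x ∘ Fin.castAdd d) ᵥ* A := by
  ext k
  simp [blockUT, submatrix_vecMul_equiv, vecMul_fromBlocks, add_comm, Function.comp_def]

theorem comp_castAdd_vecMul_eq_of_vecMul_add_eq {A' : Matrix (Fin n) (Fin d) (ZMod 2)}
    {u v : Fin (n + d) → ZMod 2} (h : v ᵥ* blockUT n d A + u = u ᵥ* blockUT n d A' + v) :
    (v ∘ Fin.castAdd d) ᵥ* A = (u ∘ Fin.castAdd d) ᵥ* A' := by
  have htail := congrArg (· ∘ Fin.natAdd n) h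
  simp only [Pi.add_comp, vecMul_comp_natAdd] at htail
  linear_combination htail

theorem comp_castAdd_vecMul_eq_zero_of_vecMul_add_self {u : Fin (n + d) → ZMod 2}
    (h : u ᵥ* blockUT n d A + u = 0) : (u ∘ Fin.castAdd d) ᵥ* A = 0 := by
  ext k
  have htail := congrFun (congrArg (· ∘ Fin.natAdd n) h) k
  simp only [Pi.add_comp, vecMul_comp_natAdd, Pi.zero_comp, Pi.add_apply] at htail
  rwa [add_right_comm, CharTwo.add_self_eq_zero, zero_add] at htail

theorem eq_zero_of_forall_vecMul_eq_self (h : ∀ x, x ᵥ* blockUT n d A = x) : A = 0 := by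
  ext j k
  have hrow := vecMul_comp_natAdd (A := A) (Pi.single (Fin.castAdd d j) 1)
  rw [h, left_eq_add, Pi.single_castAdd_comp_castAdd, single_one_vecMul] at hrow
  exact congrFun hrow k

end blockUT

theorem setOf_sum_smul_eq_zero_eq_iff_linearIndependent {n d : ℕ} {K M : Type*} [Ring K]
    [AddCommGroup M] [Module K M] (R : Fin n → M) :
    {v : Fin (n + d) → K | ∑ i, v (Fin.castAdd d i) • R i = 0}
        = {v | ∀ i : Fin (n + d), (i : ℕ) < n → v i = 0} ↔ LinearIndependent K R := by
  simp_rw [← comp_castAdd_eq_zero_iff, Fintype.linearIndependent_iff, Set.ext_iff,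
    Set.mem_ofPred_eq]
  constructor
  · intro h c hc i
    have hmem := (h (Fin.append c 0)).mp (by simpa only [Fin.append_left] using hc)
    simpa only [Function.comp_apply, Fin.append_left, Pi.zero_apply] using congrFun hmem i
  · intro h v
    refine ⟨fun hv => funext (h _ hv), fun hv => Finset.sum_eq_zero fun i _ => ?_⟩
    rw [show v (Fin.castAdd d i) = 0 from congrFun hv i, zero_smul]

section TranslationMatrices

variable {n d : ℕ} {B : (Fin (n + d) → ZMod 2) → Matrix (Fin n) (Fin d) (ZMod 2)}

theorem row_symm_of_vecMul_blockUT_add_comm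
    (hcomm : ∀ u v, v ᵥ* blockUT n d (B u) + u = u ᵥ* blockUT n d (B v) + v) (i j : Fin n) :
    B (Pi.single (Fin.castAdd d i) 1) j = B (Pi.single (Fin.castAdd d j) 1) i := by
  have h := blockUT.comp_castAdd_vecMul_eq_of_vecMul_add_eq
    (hcomm (Pi.single (Fin.castAdd d i) 1) (Pi.single (Fin.castAdd d j) 1))
  rwa [Pi.single_castAdd_comp_castAdd, Pi.single_castAdd_comp_castAdd, single_one_vecMul,
    single_one_vecMul] at h

theorem apply_eq_sum_of_vecMul_blockUT_add_comm
    (hcomm : ∀ u v, v ᵥ* blockUT n d (B u) + u = u ᵥ* blockUT n d (B v) + v)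
    (v : Fin (n + d) → ZMod 2) (j : Fin n) (k : Fin d) :
    B v j k = ∑ i, v (Fin.castAdd d i) * B (Pi.single (Fin.castAdd d i) 1) j k := by
  have hrow := blockUT.comp_castAdd_vecMul_eq_of_vecMul_add_eq
    (hcomm (Pi.single (Fin.castAdd d j) 1) v)
  rw [Pi.single_castAdd_comp_castAdd, single_one_vecMul] at hrow
  calc B v j k = ((v ∘ Fin.castAdd d) ᵥ* B (Pi.single (Fin.castAdd d j) 1)) k :=
        congrFun hrow.symm k
    _ = ∑ i, v (Fin.castAdd d i) * B (Pi.single (Fin.castAdd d j) 1) i k := rfl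
    _ = _ := by simp_rw [row_symm_of_vecMul_blockUT_add_comm hcomm j]

theorem row_self_eq_zero_of_vecMul_blockUT_add_self
    (hself : ∀ u, u ᵥ* blockUT n d (B u) + u = 0) (i : Fin n) :
    B (Pi.single (Fin.castAdd d i) 1) i = 0 := by
  have h := blockUT.comp_castAdd_vecMul_eq_zero_of_vecMul_add_self
    (hself (Pi.single (Fin.castAdd d i) 1))
  rwa [Pi.single_castAdd_comp_castAdd, single_one_vecMul] at h

theorem setOf_forall_vecMul_blockUT_add_eq_add :
    {v | ∀ x, x ᵥ* blockUT n d (B v) + v = x + v} = {v | B v = 0} := by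
  ext v
  simp only [Set.mem_ofPred_eq, add_left_inj]
  exact ⟨blockUT.eq_zero_of_forall_vecMul_eq_self, fun h x => by rw [h, blockUT.zero, vecMul_one]⟩

end TranslationMatrices

theorem stmt6_general (n d : ℕ)
    (T : Subgroup (Equiv.Perm (Fin (n + d) → ZMod 2)))
    (hab : ∀ g ∈ T, ∀ h ∈ T, g * h = h * g)
    (helem : ∀ g ∈ T, g * g = 1)
    (τ : (Fin (n + d) → ZMod 2) → Equiv.Perm (Fin (n + d) → ZMod 2))
    (hτmem : ∀ a, τ a ∈ T) (hτ0 : ∀ a, τ a 0 = a)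
    (B : (Fin (n + d) → ZMod 2) → Matrix (Fin n) (Fin d) (ZMod 2))
    (hB : ∀ v x, τ v x = x ᵥ* blockUT n d (B v) + v)
    (φ : (Fin d → ZMod 2) ≃ₗ[ZMod 2] GaloisField 2 d)
    (𝔅 : Matrix (Fin n) (Fin n) (GaloisField 2 d))
    (h𝔅 : ∀ i j : Fin n,
      𝔅 i j = φ (fun k => B (Pi.single (Fin.castAdd d i) (1 : ZMod 2)) j k)) :
    𝔅.IsSymm ∧ (∀ i, 𝔅 i i = 0) ∧
    (({v : Fin (n + d) → ZMod 2 | ∀ x, τ v x = x + v}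
        = {v : Fin (n + d) → ZMod 2 | ∀ i : Fin (n + d), (i : ℕ) < n → v i = 0})
      ↔ LinearIndependent (ZMod 2)
          (fun i : Fin n => fun p : Fin n × Fin d =>
            B (Pi.single (Fin.castAdd d i) (1 : ZMod 2)) p.1 p.2)) := by
  have hcomm : ∀ u v, v ᵥ* blockUT n d (B u) + u = u ᵥ* blockUT n d (B v) + v := fun u v => by
    simpa only [Equiv.Perm.mul_apply, hτ0, hB] using
      congrArg (· 0) (hab _ (hτmem u) _ (hτmem v))
  have hself : ∀ u, u ᵥ* blockUT n d (B u) + u = 0 := fun u => by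
    simpa only [Equiv.Perm.mul_apply, hτ0, hB, Equiv.Perm.one_apply] using
      congrArg (· 0) (helem _ (hτmem u))
  have hfix : {v | ∀ x, τ v x = x + v} = {v | ∑ i, v (Fin.castAdd d i) •
      (fun p : Fin n × Fin d => B (Pi.single (Fin.castAdd d i) 1) p.1 p.2) = 0} := by
    simp only [hB, setOf_forall_vecMul_blockUT_add_eq_add]
    ext v
    simp only [Set.mem_ofPred_eq, ← Matrix.ext_iff, funext_iff, Prod.forall, Finset.sum_apply,
      Pi.smul_apply, smul_eq_mul, Matrix.zero_apply, Pi.zero_apply,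
      apply_eq_sum_of_vecMul_blockUT_add_comm hcomm v]
  refine ⟨IsSymm.ext fun i j => ?_, fun i => ?_, ?_⟩
  · simp only [h𝔅, row_symm_of_vecMul_blockUT_add_comm hcomm]
  · simp only [h𝔅, row_self_eq_zero_of_vecMul_blockUT_add_self hself]
    exact map_zero φ
  · rw [hfix, setOf_sum_smul_eq_zero_eq_iff_linearIndependent]

/-- For a practical hidden sum `T∘` with `U(T∘) ⊇ Span{e_{n+1},…,e_{n+d}}`
and matrices `B_{e_i}` as in the structure theorem, the `n × n` matrix `𝔅∘` over `F_{2^d}`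
whose `(i,j)` entry is the `j`-th row of `B_{e_i}` (viewed in `F_{2^d}` via an `F₂`-linear
identification `φ`) is symmetric with zero diagonal, and `dim U(T∘) = d`
(i.e. `U(T∘)` equals the span of the last `d` basis vectors) iff `𝔅∘` is full rank over
`F₂` (rows of the expanded `n × nd` binary matrix are linearly independent). -/
theorem stmt6 (n d : ℕ) (hn : 2 ≤ n) (hd : 1 ≤ d)
    (T : Subgroup (Equiv.Perm (Fin (n + d) → ZMod 2)))
    (haff : ∀ g ∈ T, ∃ (L : (Fin (n + d) → ZMod 2) ≃ₗ[ZMod 2] (Fin (n + d) → ZMod 2))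
      (c : Fin (n + d) → ZMod 2), ∀ x, g x = L x + c)
    (hreg : ∀ x y : Fin (n + d) → ZMod 2,
      ∃! g : Equiv.Perm (Fin (n + d) → ZMod 2), g ∈ T ∧ g x = y)
    (hab : ∀ g ∈ T, ∀ h ∈ T, g * h = h * g)
    (helem : ∀ g ∈ T, g * g = 1)
    (τ : (Fin (n + d) → ZMod 2) → Equiv.Perm (Fin (n + d) → ZMod 2))
    (hτmem : ∀ a, τ a ∈ T) (hτ0 : ∀ a, τ a 0 = a)
    (B : (Fin (n + d) → ZMod 2) → Matrix (Fin n) (Fin d) (ZMod 2))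
    (hB : ∀ v x, τ v x = x ᵥ* blockUT n d (B v) + v)
    (φ : (Fin d → ZMod 2) ≃ₗ[ZMod 2] GaloisField 2 d)
    (𝔅 : Matrix (Fin n) (Fin n) (GaloisField 2 d))
    (h𝔅 : ∀ i j : Fin n,
      𝔅 i j = φ (fun k => B (Pi.single (Fin.castAdd d i) (1 : ZMod 2)) j k)) :
    𝔅.IsSymm ∧ (∀ i, 𝔅 i i = 0) ∧
    (({v : Fin (n + d) → ZMod 2 | ∀ x, τ v x = x + v}
        = {v : Fin (n + d) → ZMod 2 | ∀ i : Fin (n + d), (i : ℕ) < n → v i = 0})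
      ↔ LinearIndependent (ZMod 2)
          (fun i : Fin n => fun p : Fin n × Fin d =>
            B (Pi.single (Fin.castAdd d i) (1 : ZMod 2)) p.1 p.2)) :=
  stmt6_general n d T hab helem τ hτmem hτ0 B hB φ 𝔅 h𝔅
end

section
/- For q a power of 2 and n odd, there are no n × n symmetric invertible matrices over F_q with zero diagonal; for n even, their number is q^{C(n,2)} · ∏_{j=1}^{⌈(n−1)/2⌉} (1 − q^{1−2j}). -/
/-!
In characteristic 2 a symmetric matrix with zero diagonal is the same as an alternating matrix
(`Mᵀ = -M` and zero diagonal); let `N n` count the invertible alternating `n × n` matrices over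
`F_q`. The first row `r` of such a matrix is nonzero with `r 0 = 0`. Congruence `M ↦ Q M Qᵀ` by
an invertible `Q` whose first row is `e₀` keeps `M` alternating and replaces its first row `r`
by `Q r`; since such `Q` move any admissible row to any other, all `q ^ (n + 1) - 1` admissible
rows occur equally often. A matrix of size `n + 2` with first row `e₁` is a block matrix
`[[J, B], [-Bᵀ, C]]` with `J = [[0, 1], [-1, 0]]`, `B` zero except for an arbitrary second row,
and `C` alternating; its Schur complement is `C`, so its determinant is `det C`. Hence
`N (n + 2) = (q ^ (n + 1) - 1) q ^ n N n`, with `N 0 = 1` and `N 1 = 0`.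
-/

open Matrix

theorem card_subtype_apply_eq_zero_and_ne_zero {K ι : Type*} [Zero K] [Fintype K] [Fintype ι]
    (i₀ : ι) :
    Nat.card {r : ι → K // r i₀ = 0 ∧ r ≠ 0} = Fintype.card K ^ (Fintype.card ι - 1) - 1 := by
  classical
  have hsplit : {r : ι → K // r i₀ = 0} ≃ {a : K // a = 0} × ({j // j ≠ i₀} → K) :=
    (Equiv.subtypeEquiv (p := fun r : ι → K => r i₀ = 0) (q := fun p => p.1 = 0)
      (Equiv.funSplitAt i₀ K) fun _ => Iff.rfl).trans
      (Equiv.prodSubtypeFstEquivSubtypeProd (p := fun a : K => a = 0))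
  have hzero : Fintype.card {r : ι → K // r i₀ = 0} = Fintype.card K ^ (Fintype.card ι - 1) := by
    rw [Fintype.card_congr hsplit, Fintype.card_prod, Fintype.card_subtype_eq, Fintype.card_fun,
      one_mul, Fintype.card_subtype_compl, Fintype.card_subtype_eq]
  rw [← hzero, ← Set.card_ne_eq (⟨0, rfl⟩ : {r : ι → K // r i₀ = 0}), ← Nat.card_eq_fintype_card]
  exact Nat.card_congr ((Equiv.subtypeSubtypeEquivSubtypeInter _ _).symm.trans
    (Equiv.subtypeEquivRight fun r => by simp [Subtype.ext_iff]))

namespace Matrix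

variable {ι κ R : Type*} [CommRing R]

def IsAlt (M : Matrix ι ι R) : Prop :=
  Mᵀ = -M ∧ ∀ i, M i i = 0

theorem IsAlt.apply_swap {M : Matrix ι ι R} (hM : M.IsAlt) (i j : ι) : M j i = -M i j :=
  congrFun (congrFun hM.1 i) j

theorem IsAlt.submatrix {M : Matrix ι ι R} (hM : M.IsAlt) (f : κ → ι) :
    (M.submatrix f f).IsAlt :=
  ⟨by rw [transpose_submatrix, hM.1]; rfl, fun i => hM.2 (f i)⟩

theorem IsAlt.dotProduct_mulVec_self [Fintype ι] {M : Matrix ι ι R} (hM : M.IsAlt)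
    (x : ι → R) : x ⬝ᵥ M *ᵥ x = 0 := by
  have hsum : x ⬝ᵥ M *ᵥ x = ∑ p : ι × ι, x p.1 * M p.1 p.2 * x p.2 := by
    simp [dotProduct, mulVec, Finset.mul_sum, Fintype.sum_prod_type, mul_assoc]
  rw [hsum]
  refine Finset.sum_involution (fun p _ => p.swap) (fun p _ => ?_) (fun p _ hp => ?_)
    (fun _ _ => Finset.mem_univ _) (fun _ _ => rfl)
  · simp only [Prod.fst_swap, Prod.snd_swap, hM.apply_swap p.1 p.2]
    ring
  · intro h
    have hii : p.2 = p.1 := congrArg Prod.fst h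
    exact hp (by rw [← hii, hM.2, mul_zero, zero_mul])

theorem IsAlt.mul_mul_transpose [Fintype ι] {M : Matrix ι ι R} (hM : M.IsAlt)
    (Q : Matrix κ ι R) : (Q * M * Qᵀ).IsAlt := by
  refine ⟨?_, fun i => ?_⟩
  · rw [transpose_mul, transpose_mul, transpose_transpose, hM.1, Matrix.neg_mul,
      Matrix.mul_neg, Matrix.mul_assoc]
  · rw [mul_apply, ← hM.dotProduct_mulVec_self (Q i), dotProduct_mulVec]
    simp [vecMul, dotProduct, mul_apply, mul_comm]

theorem isAlt_fromBlocks_iff {A : Matrix ι ι R} {B : Matrix ι κ R} {D : Matrix κ κ R} :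
    (fromBlocks A B (-Bᵀ) D).IsAlt ↔ A.IsAlt ∧ D.IsAlt := by
  refine ⟨fun h => ⟨h.submatrix Sum.inl, h.submatrix Sum.inr⟩, fun ⟨hA, hD⟩ => ⟨?_, ?_⟩⟩
  · rw [fromBlocks_transpose, fromBlocks_neg, hA.1, hD.1, transpose_neg, transpose_transpose,
      neg_neg]
  · rintro (i | i)
    exacts [hA.2 i, hD.2 i]

theorem IsAlt.fromBlocks_toBlocks {M : Matrix (ι ⊕ κ) (ι ⊕ κ) R} (hM : M.IsAlt) :
    fromBlocks M.toBlocks₁₁ M.toBlocks₁₂ (-M.toBlocks₁₂ᵀ) M.toBlocks₂₂ = M := by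
  conv_rhs => rw [← M.fromBlocks_toBlocks]
  congr 1
  ext i j
  exact (hM.apply_swap _ _).symm

theorem isSymm_and_diag_eq_zero_iff_isAlt [CharP R 2] {M : Matrix ι ι R} :
    (M.IsSymm ∧ ∀ i, M i i = 0) ↔ M.IsAlt := by
  have hneg : -M = M := by
    ext i j
    exact CharTwo.neg_eq (M i j)
  rw [IsAlt, IsSymm, hneg]

section Field

variable {K : Type*} [Field K] [Fintype ι]

theorem exists_dotProduct_eq_one_and_ne_zero {r s : ι → K} (hr : r ≠ 0) (hs : s ≠ 0) :
    ∃ v : ι → K, v ⬝ᵥ r = 1 ∧ v ⬝ᵥ s ≠ 0 := by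
  classical
  obtain ⟨i, hi⟩ := Function.ne_iff.mp hr
  obtain ⟨j, hj⟩ := Function.ne_iff.mp hs
  set a : ι → K := Pi.single i (r i)⁻¹
  set b : ι → K := Pi.single j 1
  have ha : a ⬝ᵥ r = 1 := by simpa [a] using inv_mul_cancel₀ hi
  have hb : b ⬝ᵥ s ≠ 0 := by simpa [b] using hj
  by_cases has : a ⬝ᵥ s = 0
  · by_cases hbr : b ⬝ᵥ r = 0
    · exact ⟨a + b, by simp [add_dotProduct, ha, hbr], by simpa [add_dotProduct, has] using hb⟩
    · exact ⟨(b ⬝ᵥ r)⁻¹ • b, by simp [smul_dotProduct, hbr], by simp [smul_dotProduct, hbr, hb]⟩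
  · exact ⟨a, ha, has⟩

variable [DecidableEq ι]

theorem exists_isUnit_row_eq_single_and_mulVec_eq {i₀ : ι} {r s : ι → K} (hr₀ : r i₀ = 0)
    (hs₀ : s i₀ = 0) (hr : r ≠ 0) (hs : s ≠ 0) :
    ∃ Q : Matrix ι ι K, IsUnit Q ∧ Q i₀ = Pi.single i₀ 1 ∧ Q *ᵥ r = s := by
  obtain ⟨v, hvr, hvs⟩ := exists_dotProduct_eq_one_and_ne_zero hr hs
  -- `Q x = x + (v ⬝ᵥ x) • (s - r)`, with determinant `1 + v ⬝ᵥ (s - r) = v ⬝ᵥ s`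
  refine ⟨1 + vecMulVec (s - r) v, ?_, ?_, ?_⟩
  · rw [isUnit_iff_isUnit_det, vecMulVec_eq Unit, det_one_add_replicateCol_mul_replicateRow,
      dotProduct_sub, hvr, add_sub_cancel]
    exact hvs.isUnit
  · ext j
    simp [vecMulVec_apply, hr₀, hs₀, one_apply, Pi.single_apply, eq_comm]
  · rw [add_mulVec, one_mulVec, vecMulVec_mulVec, hvr]
    simp

theorem mul_mul_transpose_row_of_row_eq_single {Q : Matrix ι ι K} {i₀ : ι}
    (hQ : Q i₀ = Pi.single i₀ 1) (M : Matrix ι ι K) : (Q * M * Qᵀ) i₀ = Q *ᵥ M i₀ := by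
  ext j
  simp [mul_apply, hQ, mulVec, dotProduct, Pi.single_apply, mul_comm]

variable (ι K) in
def nondegAlt : Set (Matrix ι ι K) :=
  {M | M.IsAlt ∧ IsUnit M.det}

theorem row_ne_zero_of_mem_nondegAlt {M : Matrix ι ι K} (hM : M ∈ nondegAlt ι K) (i : ι) :
    M i ≠ 0 :=
  fun h => hM.2.ne_zero (det_eq_zero_of_row_eq_zero i fun j => congrFun h j)

theorem card_fiber_nondegAlt_le [Finite K] {i₀ : ι} {r s : ι → K} (hr₀ : r i₀ = 0)
    (hs₀ : s i₀ = 0) (hr : r ≠ 0) (hs : s ≠ 0) :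
    Nat.card {M ∈ nondegAlt ι K | M i₀ = r} ≤ Nat.card {M ∈ nondegAlt ι K | M i₀ = s} := by
  obtain ⟨Q, hQ, hQi₀, hQr⟩ := exists_isUnit_row_eq_single_and_mulVec_eq hr₀ hs₀ hr hs
  have hQt : IsUnit Qᵀ := (isUnit_transpose Q).mpr hQ
  let conj (M : {M ∈ nondegAlt ι K | M i₀ = r}) : {M ∈ nondegAlt ι K | M i₀ = s} :=
    ⟨Q * M * Qᵀ,
      ⟨M.2.1.1.mul_mul_transpose Q, by
        rw [← isUnit_iff_isUnit_det]
        exact (hQ.mul ((isUnit_iff_isUnit_det _).mpr M.2.1.2)).mul hQt⟩,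
      by rw [mul_mul_transpose_row_of_row_eq_single hQi₀, M.2.2, hQr]⟩
  refine Nat.card_le_card_of_injective conj fun M N h => Subtype.ext ?_
  exact hQ.mul_left_cancel (hQt.mul_right_cancel (congrArg Subtype.val h))

theorem card_fiber_nondegAlt_eq [Finite K] {i₀ : ι} {r s : ι → K} (hr₀ : r i₀ = 0)
    (hs₀ : s i₀ = 0) (hr : r ≠ 0) (hs : s ≠ 0) :
    Nat.card {M ∈ nondegAlt ι K | M i₀ = r} = Nat.card {M ∈ nondegAlt ι K | M i₀ = s} :=
  (card_fiber_nondegAlt_le hr₀ hs₀ hr hs).antisymm (card_fiber_nondegAlt_le hs₀ hr₀ hs hr)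

theorem card_nondegAlt_eq_mul_card_fiber [Fintype K] (i₀ : ι) {s : ι → K} (hs₀ : s i₀ = 0)
    (hs : s ≠ 0) :
    Nat.card (nondegAlt ι K) =
      (Fintype.card K ^ (Fintype.card ι - 1) - 1) * Nat.card {M ∈ nondegAlt ι K | M i₀ = s} := by
  classical
  let row (M : nondegAlt ι K) : {r : ι → K // r i₀ = 0 ∧ r ≠ 0} :=
    ⟨M.1 i₀, M.2.1.2 i₀, row_ne_zero_of_mem_nondegAlt M.2 i₀⟩
  have hfiber (r : {r : ι → K // r i₀ = 0 ∧ r ≠ 0}) :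
      Nat.card {M // row M = r} = Nat.card {M ∈ nondegAlt ι K | M i₀ = s} := by
    rw [← card_fiber_nondegAlt_eq r.2.1 hs₀ r.2.2 hs]
    exact Nat.card_congr <| (Equiv.subtypeEquivRight fun M => Subtype.ext_iff).trans
      (Equiv.subtypeSubtypeEquivSubtypeInter (· ∈ nondegAlt ι K) (· i₀ = r.1))
  rw [← Nat.card_congr (Equiv.sigmaFiberEquiv row), Nat.card_sigma,
    Finset.sum_congr rfl fun r _ => hfiber r, Finset.sum_const, Finset.card_univ,
    ← Nat.card_eq_fintype_card, card_subtype_apply_eq_zero_and_ne_zero, smul_eq_mul]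

end Field

section Block

def altBlock (b : κ → R) (C : Matrix κ κ R) : Matrix (Fin 2 ⊕ κ) (Fin 2 ⊕ κ) R :=
  fromBlocks !![0, 1; -1, 0] (of ![0, b]) (-(of ![0, b])ᵀ) C

theorem isAlt_altBlock_iff {b : κ → R} {C : Matrix κ κ R} : (altBlock b C).IsAlt ↔ C.IsAlt := by
  rw [altBlock, isAlt_fromBlocks_iff, and_iff_right]
  refine ⟨?_, fun i => ?_⟩
  · ext i j
    fin_cases i <;> fin_cases j <;> simp
  · fin_cases i <;> simp

theorem altBlock_apply_inl_zero [DecidableEq κ] (b : κ → R) (C : Matrix κ κ R) :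
    altBlock b C (Sum.inl 0) = Pi.single (Sum.inl 1) 1 := by
  ext (j | j)
  · fin_cases j <;> simp [altBlock]
  · simp [altBlock]

theorem det_altBlock [Fintype κ] [DecidableEq κ] (b : κ → R) (C : Matrix κ κ R) :
    (altBlock b C).det = C.det := by
  let J : Matrix (Fin 2) (Fin 2) R := !![0, 1; -1, 0]
  have hJ : J * -J = 1 := by
    ext i j
    fin_cases i <;> fin_cases j <;> simp [J]
  let _ : Invertible J := ⟨-J, by simpa using hJ, hJ⟩
  have hschur : (-(of ![0, b])ᵀ) * ⅟J * of ![0, b] = 0 := by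
    rw [show ⅟J = -J from rfl]
    ext i j
    simp [J, mul_apply, Fin.sum_univ_two]
  rw [altBlock, det_fromBlocks₁₁ J, hschur, sub_zero, det_fin_two]
  simp [J]

theorem IsAlt.eq_altBlock [DecidableEq κ] {M : Matrix (Fin 2 ⊕ κ) (Fin 2 ⊕ κ) R} (hM : M.IsAlt)
    (h₀ : M (Sum.inl 0) = Pi.single (Sum.inl 1) 1) :
    M = altBlock (fun j => M (Sum.inl 1) (Sum.inr j)) M.toBlocks₂₂ := by
  have h₁₁ : M.toBlocks₁₁ = !![0, 1; -1, 0] := by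
    ext i j
    fin_cases i <;> fin_cases j <;> simp [toBlocks₁₁, h₀, hM.2, hM.apply_swap (Sum.inl 0)]
  have h₁₂ : M.toBlocks₁₂ = of ![0, fun j => M (Sum.inl 1) (Sum.inr j)] := by
    ext i j
    fin_cases i <;> simp [toBlocks₁₂, h₀]
  rw [altBlock, ← h₁₁, ← h₁₂, hM.fromBlocks_toBlocks]

variable {K : Type*} [Field K] [Fintype κ] [DecidableEq κ]

def nondegAltFiberEquiv :
    {M ∈ nondegAlt (Fin 2 ⊕ κ) K | M (Sum.inl 0) = Pi.single (Sum.inl 1) 1} ≃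
      (κ → K) × nondegAlt κ K where
  toFun M := (fun j => M.1 (Sum.inl 1) (Sum.inr j),
    ⟨M.1.toBlocks₂₂, M.2.1.1.submatrix Sum.inr, by
      rw [← det_altBlock (fun j => M.1 (Sum.inl 1) (Sum.inr j)), ← M.2.1.1.eq_altBlock M.2.2]
      exact M.2.1.2⟩)
  invFun p := ⟨altBlock p.1 p.2,
    ⟨isAlt_altBlock_iff.mpr p.2.2.1, by rw [det_altBlock]; exact p.2.2.2⟩,
    altBlock_apply_inl_zero p.1 p.2⟩
  left_inv M := Subtype.ext (M.2.1.1.eq_altBlock M.2.2).symm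
  right_inv p := by
    ext <;> simp [altBlock]

end Block

variable {K : Type*} [Field K]

theorem card_nondegAlt_congr [Fintype ι] [DecidableEq ι] [Fintype κ] [DecidableEq κ]
    (e : ι ≃ κ) :
    Nat.card (nondegAlt ι K) = Nat.card (nondegAlt κ K) := by
  refine Nat.card_congr ((reindex e e).subtypeEquiv fun M => ⟨fun hM => ?_, fun hM => ?_⟩)
  · exact ⟨hM.1.submatrix _, by rw [det_reindex_self]; exact hM.2⟩
  · have hM' := hM.1.submatrix e
    simp only [reindex_apply, submatrix_submatrix, Equiv.symm_comp_self, submatrix_id_id] at hM'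
    exact ⟨hM', by rw [← det_reindex_self e]; exact hM.2⟩

theorem card_nondegAlt_fin_zero : Nat.card (nondegAlt (Fin 0) K) = 1 := by
  rw [Nat.card_eq_one_iff_exists]
  refine ⟨⟨0, ⟨⟨Subsingleton.elim _ _, finZeroElim⟩, by simp⟩⟩, fun M => ?_⟩
  exact Subtype.ext (Subsingleton.elim _ _)

theorem card_nondegAlt_fin_one : Nat.card (nondegAlt (Fin 1) K) = 0 := by
  refine Nat.card_eq_zero.mpr (Or.inl ⟨fun M => ?_⟩)
  have h := M.2.2
  rw [det_fin_one, M.2.1.2 0] at h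
  exact not_isUnit_zero h

variable [Fintype K]

theorem card_nondegAlt_fin_two_sum [Fintype κ] [DecidableEq κ] :
    Nat.card (nondegAlt (Fin 2 ⊕ κ) K) =
      (Fintype.card K ^ (Fintype.card κ + 1) - 1) *
        (Fintype.card K ^ Fintype.card κ * Nat.card (nondegAlt κ K)) := by
  rw [card_nondegAlt_eq_mul_card_fiber (Sum.inl 0) (s := Pi.single (Sum.inl 1) 1) (by simp)
      (by simp), Nat.card_congr nondegAltFiberEquiv, Nat.card_prod, Nat.card_fun,
    Fintype.card_sum, Fintype.card_fin, Nat.card_eq_fintype_card, Nat.card_eq_fintype_card]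
  congr 3
  omega

theorem card_nondegAlt_fin_add_two (n : ℕ) :
    Nat.card (nondegAlt (Fin (n + 2)) K) =
      (Fintype.card K ^ (n + 1) - 1) * (Fintype.card K ^ n * Nat.card (nondegAlt (Fin n) K)) := by
  rw [← card_nondegAlt_congr (finSumFinEquiv.trans (finCongr (add_comm 2 n))),
    card_nondegAlt_fin_two_sum, Fintype.card_fin]

theorem card_nondegAlt_fin_odd (m : ℕ) : Nat.card (nondegAlt (Fin (2 * m + 1)) K) = 0 := by
  induction m with
  | zero => exact card_nondegAlt_fin_one
  | succ m ih =>
    rw [show 2 * (m + 1) + 1 = 2 * m + 1 + 2 by ring, card_nondegAlt_fin_add_two, ih, mul_zero,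
      mul_zero]

theorem card_nondegAlt_fin_even (m : ℕ) :
    (Nat.card (nondegAlt (Fin (2 * m)) K) : ℝ) =
      (Fintype.card K : ℝ) ^ (2 * m).choose 2 *
        ∏ j ∈ Finset.Icc 1 m, (1 - (Fintype.card K : ℝ) ^ ((1 : ℤ) - 2 * j)) := by
  set q : ℝ := (Fintype.card K : ℝ)
  have hq : q ≠ 0 := by simp [q]
  induction m with
  | zero =>
    show (Nat.card (nondegAlt (Fin 0) K) : ℝ) = _
    rw [card_nondegAlt_fin_zero]
    simp
  | succ m ih =>
    have hchoose : (2 * m + 2).choose 2 = (2 * m).choose 2 + 2 * m + (2 * m + 1) := by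
      rw [Nat.choose_succ_succ' (2 * m + 1) 1, Nat.choose_succ_succ' (2 * m) 1,
        Nat.choose_one_right, Nat.choose_one_right]
      ring
    have hfactor : q ^ (2 * m + 1) * (1 - q ^ ((1 : ℤ) - 2 * (m + 1))) = q ^ (2 * m + 1) - 1 := by
      rw [show (1 : ℤ) - 2 * (m + 1) = -(2 * m + 1 : ℕ) by push_cast; ring, _root_.zpow_neg,
        zpow_natCast, mul_sub, mul_one, mul_inv_cancel₀ (pow_ne_zero _ hq)]
    rw [show 2 * (m + 1) = 2 * m + 2 by ring, card_nondegAlt_fin_add_two, hchoose,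
      Finset.prod_Icc_succ_top (by omega)]
    push_cast [Nat.cast_sub (Nat.one_le_pow _ _ Fintype.card_pos)]
    rw [ih, ← hfactor]
    ring

end Matrix

theorem stmt7_general (d n : ℕ) (F : Type) [Field F] [Fintype F]
    (hF : Fintype.card F = 2 ^ d) :
    (Odd n →
      Nat.card {M : Matrix (Fin n) (Fin n) F //
        M.IsSymm ∧ (∀ i, M i i = 0) ∧ IsUnit M.det} = 0) ∧
    (Even n →
      (Nat.card {M : Matrix (Fin n) (Fin n) F //
          M.IsSymm ∧ (∀ i, M i i = 0) ∧ IsUnit M.det} : ℝ)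
        = ((2 : ℝ) ^ d) ^ (n * (n - 1) / 2)
            * ∏ j ∈ Finset.Icc 1 (n / 2), (1 - ((2 : ℝ) ^ d) ^ ((1 : ℤ) - 2 * (j : ℤ)))) := by
  have : CharP F 2 := charP_of_card_eq_prime_pow hF
  have hcard : Nat.card {M : Matrix (Fin n) (Fin n) F //
      M.IsSymm ∧ (∀ i, M i i = 0) ∧ IsUnit M.det} = Nat.card (nondegAlt (Fin n) F) :=
    Nat.card_congr <| Equiv.subtypeEquivRight fun M => by
      rw [← and_assoc, isSymm_and_diag_eq_zero_iff_isAlt]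
      rfl
  have hq : (2 : ℝ) ^ d = Fintype.card F := by rw [hF]; push_cast; rfl
  rw [hcard, hq]
  refine ⟨fun ⟨m, hm⟩ => hm ▸ card_nondegAlt_fin_odd m, fun ⟨m, hm⟩ => ?_⟩
  obtain rfl : n = 2 * m := by omega
  rw [← Nat.choose_two_right, Nat.mul_div_cancel_left m two_pos, card_nondegAlt_fin_even]

/-- Over a finite field of order `q = 2^d`, there are no `n × n` symmetric
invertible matrices with zero diagonal when `n` is odd; and when `n` is even their number
is `q^{n(n-1)/2} ∏_{j=1}^{⌈(n-1)/2⌉} (1 - q^{1-2j})` (note `⌈(n-1)/2⌉ = n/2` for `n` even). -/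
theorem stmt7 (d n : ℕ) (hd : 1 ≤ d) (F : Type) [Field F] [Fintype F]
    (hF : Fintype.card F = 2 ^ d) :
    (Odd n →
      Nat.card {M : Matrix (Fin n) (Fin n) F //
        M.IsSymm ∧ (∀ i, M i i = 0) ∧ IsUnit M.det} = 0) ∧
    (Even n →
      (Nat.card {M : Matrix (Fin n) (Fin n) F //
          M.IsSymm ∧ (∀ i, M i i = 0) ∧ IsUnit M.det} : ℝ)
        = ((2 : ℝ) ^ d) ^ (n * (n - 1) / 2)
            * ∏ j ∈ Finset.Icc 1 (n / 2), (1 - ((2 : ℝ) ^ d) ^ ((1 : ℤ) - 2 * (j : ℤ)))) :=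
  stmt7_general d n F hF
end

section
/- Let 𝔅' be an (n−1)×(n−1) symmetric zero-diagonal matrix over F_{2^d} that is full rank over F_2 (as an (n−1) × (n−1)d binary matrix). Then the number of vectors b ∈ (F_{2^d})^{n−1} such that the n×n matrix [[0, b],[bᵀ, 𝔅']] is symmetric, zero-diagonal, and full rank over F_2 equals 2^{d(n−1)} − 2^{n−1}. -/
open Matrix

/-- The bordered matrix `[[0, b],[bᵀ, B']]`. -/
def borderMat {m : ℕ} {F : Type} [Zero F] (B' : Matrix (Fin m) (Fin m) F)
    (b : Fin m → F) : Matrix (Unit ⊕ Fin m) (Unit ⊕ Fin m) F :=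
  Matrix.fromBlocks 0 (Matrix.of fun _ j => b j) (Matrix.of fun i _ => b i) B'

/-!
Every bordered matrix is symmetric with zero diagonal, so only the rank condition matters.
As the rows of `B'` are independent, the rows of `[[0, b],[bᵀ, B']]` are independent iff the
first row `(0, b)` is not an `F₂`-combination `∑ cᵢ (bᵢ, B'ᵢ)` of the others. Such a combination
exists iff `b = ∑ cᵢ B'ᵢ`, because its first entry `∑ cᵢ bᵢ = ∑ᵢ ∑ⱼ cᵢ cⱼ B'ⱼᵢ` then vanishes
automatically: `B'` is alternating and we are in characteristic `2`. So the good border vectors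
are those outside the `F₂`-row space of `B'`, which has `2^{n-1}` elements.
-/

section CharTwo

variable {G : Type*} [AddCommGroup G] [Module (ZMod 2) G] {ι : Type*} [Fintype ι]

theorem Finset.sum_sum_eq_zero_of_symm {t : ι → ι → G} (hsymm : ∀ i j, t i j = t j i)
    (hdiag : ∀ i, t i i = 0) : ∑ i, ∑ j, t i j = 0 := by
  rw [← Fintype.sum_prod_type']
  refine Finset.sum_ninvolution Prod.swap (fun p => ?_) (fun p hp hswap => hp ?_)
    (fun _ => Finset.mem_univ _) Prod.swap_swap
  · rw [Prod.fst_swap, Prod.snd_swap, hsymm p.2 p.1]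
    exact ZModModule.add_self _
  · have hp : p.1 = p.2 := congrArg Prod.snd hswap
    rw [hp]
    exact hdiag _

theorem Matrix.IsSymm.sum_smul_sum_smul_eq_zero {A : Matrix ι ι G} (hA : A.IsSymm)
    (hdiag : ∀ i, A i i = 0) (c : ι → ZMod 2) : ∑ i, c i • (∑ j, c j • A j) i = 0 := by
  simp only [Finset.sum_apply, Pi.smul_apply, Finset.smul_sum, smul_smul]
  refine Finset.sum_sum_eq_zero_of_symm (fun i j => ?_) (fun i => by rw [hdiag, smul_zero])
  rw [mul_comm, hA.apply]

end CharTwo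

theorem linearIndependent_sum_unit_iff {K V ι : Type*} [DivisionRing K] [AddCommGroup V]
    [Module K V] {v : Unit ⊕ ι → V} :
    LinearIndependent K v ↔
      LinearIndependent K (v ∘ Sum.inr) ∧
        v (Sum.inl ()) ∉ Submodule.span K (Set.range (v ∘ Sum.inr)) := by
  rw [linearIndependent_sum, @linearIndependent_unique_iff Unit, Set.range_unique, disjoint_comm,
    Submodule.disjoint_span_singleton]
  exact ⟨fun ⟨hne, hli, hdisj⟩ => ⟨hli, fun hmem => hne (hdisj hmem)⟩,
    fun ⟨hli, hnmem⟩ =>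
      ⟨(ne_of_mem_of_not_mem (zero_mem _) hnmem).symm, hli, fun hmem => absurd hmem hnmem⟩⟩

theorem natCard_compl_span {K V ι : Type*} [Field K] [Finite K] [AddCommGroup V] [Module K V]
    [Finite V] [Fintype ι] {v : ι → V} (hv : LinearIndependent K v) :
    Nat.card {x // x ∉ Submodule.span K (Set.range v)} =
      Nat.card V - Nat.card K ^ Fintype.card ι := by
  classical
  have := Fintype.ofFinite V
  rw [Nat.card_eq_fintype_card, Fintype.card_subtype_compl, ← Nat.card_eq_fintype_card,
    ← Nat.card_eq_fintype_card,
    Module.natCard_eq_pow_finrank (K := K) (V := Submodule.span K (Set.range v)),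
    finrank_span_eq_card hv]

section Border

variable {m : ℕ} {F : Type}

theorem isSymm_borderMat [Zero F] {B' : Matrix (Fin m) (Fin m) F} (hsymm : B'.IsSymm)
    (b : Fin m → F) : (borderMat B' b).IsSymm :=
  IsSymm.fromBlocks isSymm_zero rfl hsymm

theorem borderMat_apply_self [Zero F] {B' : Matrix (Fin m) (Fin m) F} (hdiag : ∀ i, B' i i = 0)
    (b : Fin m → F) : ∀ i, borderMat B' b i i = 0
  | .inl _ => rfl
  | .inr i => hdiag i

theorem borderMat_inl [Zero F] (B' : Matrix (Fin m) (Fin m) F) (b : Fin m → F) :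
    borderMat B' b (Sum.inl ()) = Sum.elim (0 : Unit → F) b := by
  ext (_ | j) <;> rfl

theorem borderMat_inr [Zero F] (B' : Matrix (Fin m) (Fin m) F) (b : Fin m → F) (i : Fin m) :
    borderMat B' b (Sum.inr i) = Sum.elim (fun _ => b i) (B' i) := by
  ext (_ | j) <;> rfl

theorem linearIndependent_borderMat_iff [AddCommGroup F] [Module (ZMod 2) F]
    {B' : Matrix (Fin m) (Fin m) F} (hsymm : B'.IsSymm) (hdiag : ∀ i, B' i i = 0)
    (hrank : LinearIndependent (ZMod 2) (fun i => B' i)) (b : Fin m → F) :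
    LinearIndependent (ZMod 2) (fun i => borderMat B' b i) ↔
      b ∉ Submodule.span (ZMod 2) (Set.range fun i => B' i) := by
  have hrows : LinearIndependent (ZMod 2) ((fun i => borderMat B' b i) ∘ Sum.inr) :=
    LinearIndependent.of_comp (LinearMap.funLeft (ZMod 2) F Sum.inr) hrank
  rw [linearIndependent_sum_unit_iff, and_iff_right hrows, not_iff_not,
    Submodule.mem_span_range_iff_exists_fun, Submodule.mem_span_range_iff_exists_fun]
  refine exists_congr fun c => ?_
  have hcomb : ∑ i, c i • borderMat B' b (Sum.inr i) =
      Sum.elim (fun _ => ∑ i, c i • b i) (∑ i, c i • B' i) := by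
    ext (_ | j) <;> simp [borderMat_inr, Finset.sum_apply]
  rw [Function.comp_def, hcomb, borderMat_inl]
  constructor
  · intro h
    simpa using congrArg (· ∘ Sum.inr) h
  · rintro rfl
    rw [hsymm.sum_smul_sum_smul_eq_zero hdiag c]
    rfl

end Border

theorem stmt8_general (d n : ℕ)
    (F : Type) [Field F] [Fintype F] [Algebra (ZMod 2) F]
    (hF : Fintype.card F = 2 ^ d)
    (B' : Matrix (Fin (n - 1)) (Fin (n - 1)) F)
    (hsymm : B'.IsSymm) (hdiag : ∀ i, B' i i = 0)
    (hrank : LinearIndependent (ZMod 2) (fun i => B' i)) :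
    Nat.card {b : Fin (n - 1) → F //
        (borderMat B' b).IsSymm ∧ (∀ i, borderMat B' b i i = 0) ∧
        LinearIndependent (ZMod 2) (fun i => borderMat B' b i)}
      = 2 ^ (d * (n - 1)) - 2 ^ (n - 1) := by
  have hgood : ∀ b : Fin (n - 1) → F,
      ((borderMat B' b).IsSymm ∧ (∀ i, borderMat B' b i i = 0) ∧
        LinearIndependent (ZMod 2) (fun i => borderMat B' b i)) ↔
      b ∉ Submodule.span (ZMod 2) (Set.range fun i => B' i) := fun b => by
    rw [linearIndependent_borderMat_iff hsymm hdiag hrank, and_iff_right (isSymm_borderMat hsymm b),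
      and_iff_right (borderMat_apply_self hdiag b)]
  rw [Nat.card_congr (Equiv.subtypeEquivRight hgood), natCard_compl_span hrank, Nat.card_fun,
    Nat.card_eq_fintype_card, hF, Nat.card_zmod, Nat.card_fin, Fintype.card_fin, ← pow_mul]

/-- If `𝔅'` is an `(n-1) × (n-1)` symmetric zero-diagonal matrix over
`F_{2^d}` that is full rank over `F₂` (its rows are `F₂`-linearly independent), then the
number of border vectors `b` making `[[0,b],[bᵀ,𝔅']]` symmetric, zero-diagonal, and full
rank over `F₂` is `2^{d(n-1)} - 2^{n-1}`. -/
theorem stmt8 (d n : ℕ) (hd : 1 ≤ d) (hn : 3 ≤ n)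
    (F : Type) [Field F] [Fintype F] [Algebra (ZMod 2) F]
    (hF : Fintype.card F = 2 ^ d)
    (B' : Matrix (Fin (n - 1)) (Fin (n - 1)) F)
    (hsymm : B'.IsSymm) (hdiag : ∀ i, B' i i = 0)
    (hrank : LinearIndependent (ZMod 2) (fun i => B' i)) :
    Nat.card {b : Fin (n - 1) → F //
        (borderMat B' b).IsSymm ∧ (∀ i, borderMat B' b i i = 0) ∧
        LinearIndependent (ZMod 2) (fun i => borderMat B' b i)}
      = 2 ^ (d * (n - 1)) - 2 ^ (n - 1) :=
  stmt8_general d n F hF B' hsymm hdiag hrank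
end

section
/- Let M_{n,d} denote the set of n×n symmetric zero-diagonal matrices over F_{2^d} that are full rank over F_2. Then |M_{n,d}| ≥ ν(n,d), where ν(n,d) = q^{C(n,2)} ∏_{j=1}^{⌈(n−1)/2⌉}(1 − q^{1−2j}) if n is even, and ν(n,d) = (q^{n−1} − 2^{n−1}) q^{C(n−1,2)} ∏_{j=1}^{⌈(n−2)/2⌉}(1 − q^{1−2j}) if n is odd, with q = 2^d. -/
/-!
In characteristic 2 a symmetric matrix with zero diagonal is an alternating form. An invertible
one of size `n + 2` is built from one `B` of size `n` and a nonzero `v`, its last row being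
`(v, 0)`: for a pivot `k` with `v k ≠ 0` the rows `k` and `last` span a hyperbolic plane, the
other entries `w` of row `k` are free, and the remaining block is chosen with Schur complement
`B`. The data can be read back from the matrix, so there are at least
`∏ j < m, (q ^ (2j+1) - 1) q ^ (2j)` invertible ones of size `2m`, and their rows are
independent over `𝔽₂`. In size `2m + 1`, border such a `B` by a column outside the `𝔽₂`-span of
its rows (at least `q ^ (2m) - 2 ^ (2m)` choices) and a zero corner. The product above is
`ν(2m, d)` rewritten with nonnegative powers of `q`.
-/

open Matrix Finset

def symmHollowUnits (ι F : Type*) [Fintype ι] [DecidableEq ι] [Field F] :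
    Set (Matrix ι ι F) :=
  {M | M.IsSymm ∧ (∀ i, M i i = 0) ∧ IsUnit M}

def symmHollowF2Indep (ι F : Type*) [Field F] [Algebra (ZMod 2) F] : Set (Matrix ι ι F) :=
  {M | M.IsSymm ∧ (∀ i, M i i = 0) ∧ LinearIndependent (ZMod 2) (fun i => M i)}

lemma symmHollowUnits_subset_symmHollowF2Indep (ι F : Type*) [Fintype ι] [DecidableEq ι]
    [Field F] [Algebra (ZMod 2) F] : symmHollowUnits ι F ⊆ symmHollowF2Indep ι F :=
  fun _ ⟨hsymm, hdiag, hunit⟩ =>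
    ⟨hsymm, hdiag, (linearIndependent_rows_of_isUnit hunit).restrict_scalars' (ZMod 2)⟩

section Hyperbolic

variable {ι F : Type*} [Field F]

def hyperbolic (c : F) : Matrix (Fin 2) (Fin 2) F := !![0, c; c, 0]

lemma hyperbolic_transpose (c : F) : (hyperbolic c)ᵀ = hyperbolic c := by
  ext i j; fin_cases i <;> fin_cases j <;> rfl

def borderHyperbolic (B : Matrix ι ι F) (X : Matrix ι (Fin 2) F) (c : F) :
    Matrix (ι ⊕ Fin 2) (ι ⊕ Fin 2) F :=
  fromBlocks (B + X * hyperbolic c⁻¹ * Xᵀ) X Xᵀ (hyperbolic c)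

lemma det_borderHyperbolic [Fintype ι] [DecidableEq ι] (B : Matrix ι ι F)
    (X : Matrix ι (Fin 2) F) {c : F} (hc : c ≠ 0) :
    (borderHyperbolic B X c).det = -(c * c) * B.det := by
  let _ : Invertible (hyperbolic c) := invertibleOfLeftInverse _ (hyperbolic c⁻¹) (by
    ext i j; fin_cases i <;> fin_cases j <;> simp [hyperbolic, hc])
  rw [borderHyperbolic, det_fromBlocks₂₂, show ⅟(hyperbolic c) = hyperbolic c⁻¹ from rfl,
    add_sub_cancel_right]
  simp [hyperbolic, det_fin_two_of]

lemma borderHyperbolic_isSymm {B : Matrix ι ι F} (hB : B.IsSymm) (X : Matrix ι (Fin 2) F)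
    (c : F) : (borderHyperbolic B X c).IsSymm := by
  simp only [IsSymm, borderHyperbolic, fromBlocks_transpose, transpose_add, transpose_mul,
    transpose_transpose, hyperbolic_transpose, hB.eq, Matrix.mul_assoc]

lemma borderHyperbolic_apply_self (h2 : (2 : F) = 0) {B : Matrix ι ι F} (hB : ∀ i, B i i = 0)
    (X : Matrix ι (Fin 2) F) (c : F) (s : ι ⊕ Fin 2) : borderHyperbolic B X c s s = 0 := by
  rcases s with i | t
  · have hquad : (X * hyperbolic c⁻¹ * Xᵀ) i i = 2 * (c⁻¹ * X i 0 * X i 1) := by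
      simp [mul_apply, Fin.sum_univ_two, hyperbolic]; ring
    simp [borderHyperbolic, hB, hquad, h2]
  · fin_cases t <;> rfl

lemma borderHyperbolic_injective {B B' : Matrix ι ι F} {X X' : Matrix ι (Fin 2) F} {c : F}
    (h : borderHyperbolic B X c = borderHyperbolic B' X' c) : B = B' ∧ X = X' := by
  obtain ⟨hA, rfl, -, -⟩ := fromBlocks_inj.mp h
  exact ⟨add_right_cancel hA, rfl⟩

lemma borderHyperbolic_mem_symmHollowUnits [Fintype ι] [DecidableEq ι] (h2 : (2 : F) = 0)
    {B : Matrix ι ι F} (hB : B ∈ symmHollowUnits ι F) (X : Matrix ι (Fin 2) F) {c : F}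
    (hc : c ≠ 0) : borderHyperbolic B X c ∈ symmHollowUnits (ι ⊕ Fin 2) F := by
  obtain ⟨hsymm, hdiag, hunit⟩ := hB
  refine ⟨borderHyperbolic_isSymm hsymm X c, borderHyperbolic_apply_self h2 hdiag X c, ?_⟩
  rw [isUnit_iff_isUnit_det, isUnit_iff_ne_zero] at hunit ⊢
  rw [det_borderHyperbolic B X hc]
  exact mul_ne_zero (neg_ne_zero.mpr (mul_ne_zero hc hc)) hunit

end Hyperbolic

lemma reindex_mem_symmHollowUnits {ι κ F : Type*} [Fintype ι] [DecidableEq ι] [Fintype κ]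
    [DecidableEq κ] [Field F] (e : ι ≃ κ) {M : Matrix ι ι F}
    (hM : M ∈ symmHollowUnits ι F) : reindex e e M ∈ symmHollowUnits κ F := by
  obtain ⟨hsymm, hdiag, hunit⟩ := hM
  refine ⟨hsymm.submatrix _, fun i => hdiag _, ?_⟩
  rwa [isUnit_iff_isUnit_det, det_reindex_self, ← isUnit_iff_isUnit_det]

section Pivot

variable {F : Type*} [Field F] {n : ℕ}

def pivotEquiv (k : Fin (n + 1)) : Fin n ⊕ Fin 2 ≃ Fin (n + 2) :=
  finSumFinEquiv.trans (Equiv.swap (Fin.last n).castSucc k.castSucc)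

lemma pivotEquiv_inr_zero (k : Fin (n + 1)) : pivotEquiv k (.inr 0) = k.castSucc := by
  rw [pivotEquiv, Equiv.trans_apply, finSumFinEquiv_apply_right]
  exact Equiv.swap_apply_left _ _

lemma pivotEquiv_inr_one (k : Fin (n + 1)) : pivotEquiv k (.inr 1) = Fin.last (n + 1) := by
  rw [pivotEquiv, Equiv.trans_apply, finSumFinEquiv_apply_right]
  exact Equiv.swap_apply_of_ne_of_ne (Fin.castSucc_lt_last _).ne' (Fin.castSucc_lt_last _).ne'

def hyperbolicExtension (B : Matrix (Fin n) (Fin n) F) (w : Fin n → F) (v : Fin (n + 1) → F)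
    (k : Fin (n + 1)) : Matrix (Fin (n + 2)) (Fin (n + 2)) F :=
  reindex (pivotEquiv k) (pivotEquiv k) <| borderHyperbolic B
    (of fun i => ![w i, (Fin.snoc v 0 : Fin (n + 2) → F) (pivotEquiv k (.inl i))]) (v k)

lemma hyperbolicExtension_last (B : Matrix (Fin n) (Fin n) F) (w : Fin n → F)
    (v : Fin (n + 1) → F) (k : Fin (n + 1)) :
    hyperbolicExtension B w v k (Fin.last (n + 1)) = Fin.snoc v 0 := by
  ext j
  obtain ⟨s, rfl⟩ := (pivotEquiv k).surjective j
  rw [hyperbolicExtension, reindex_apply, submatrix_apply, ← pivotEquiv_inr_one k,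
    Equiv.symm_apply_apply, Equiv.symm_apply_apply]
  rcases s with i | t
  · rfl
  · fin_cases t
    · simp [borderHyperbolic, hyperbolic, pivotEquiv_inr_zero]
    · simp [borderHyperbolic, hyperbolic, pivotEquiv_inr_one]

lemma hyperbolicExtension_injective {B B' : Matrix (Fin n) (Fin n) F} {w w' : Fin n → F}
    {v : Fin (n + 1) → F} {k : Fin (n + 1)}
    (h : hyperbolicExtension B w v k = hyperbolicExtension B' w' v k) : B = B' ∧ w = w' := by
  obtain ⟨rfl, hX⟩ := borderHyperbolic_injective ((reindex _ _).injective h)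
  exact ⟨rfl, funext fun i => congrFun (congrFun hX i) 0⟩

end Pivot

section EvenCount

variable {F : Type*} [Field F] [Fintype F]

lemma card_symmHollowUnits_add_two (h2 : (2 : F) = 0) (n : ℕ) :
    (Fintype.card F ^ (n + 1) - 1) * Fintype.card F ^ n * Nat.card (symmHollowUnits (Fin n) F)
      ≤ Nat.card (symmHollowUnits (Fin (n + 2)) F) := by
  classical
  let pivot (v : {v : Fin (n + 1) → F // v ≠ 0}) : Fin (n + 1) :=
    (Function.ne_iff.mp v.2).choose
  have hpivot (v : {v : Fin (n + 1) → F // v ≠ 0}) : v.1 (pivot v) ≠ 0 :=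
    (Function.ne_iff.mp v.2).choose_spec
  let Data := {v : Fin (n + 1) → F // v ≠ 0} × (Fin n → F) × symmHollowUnits (Fin n) F
  let extend (x : Data) : symmHollowUnits (Fin (n + 2)) F :=
    ⟨hyperbolicExtension x.2.2 x.2.1 x.1 (pivot x.1), reindex_mem_symmHollowUnits _
      (borderHyperbolic_mem_symmHollowUnits h2 x.2.2.2 _ (hpivot x.1))⟩
  have extend_injective : Function.Injective extend := by
    rintro ⟨v, w, B⟩ ⟨v', w', B'⟩ h
    have hM := congrArg Subtype.val h
    have hlast := congrFun hM (Fin.last (n + 1))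
    simp only [extend, hyperbolicExtension_last] at hlast
    obtain rfl : v = v' := Subtype.ext (Fin.snoc_injective2 hlast).1
    obtain ⟨hB, hw⟩ := hyperbolicExtension_injective hM
    exact Prod.ext rfl (Prod.ext hw (Subtype.ext hB))
  calc _ = Nat.card Data := by
        simp [Data, Nat.card_eq_fintype_card, Fintype.card_subtype_compl, mul_assoc]
    _ ≤ _ := Nat.card_le_card_of_injective extend extend_injective

lemma prod_le_card_symmHollowUnits (h2 : (2 : F) = 0) (m : ℕ) :
    ∏ j ∈ range m, (Fintype.card F ^ (2 * j + 1) - 1) * Fintype.card F ^ (2 * j)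
      ≤ Nat.card (symmHollowUnits (Fin (2 * m)) F) := by
  induction m with
  | zero =>
    have : Nonempty (symmHollowUnits (Fin 0) F) := ⟨1, isSymm_one, fun i => i.elim0, isUnit_one⟩
    simp
  | succ m ih =>
    rw [prod_range_succ, mul_comm]
    exact (Nat.mul_le_mul_left _ ih).trans (card_symmHollowUnits_add_two h2 (2 * m))

end EvenCount

section Border

variable {F : Type*} [Field F] {n : ℕ}

def borderZero (B : Matrix (Fin n) (Fin n) F) (b : Fin n → F) :
    Matrix (Fin (n + 1)) (Fin (n + 1)) F :=
  of (Fin.snoc (fun i => (Fin.snoc (B i) (b i) : Fin (n + 1) → F)) (Fin.snoc b 0))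

@[simp] lemma borderZero_castSucc_castSucc (B : Matrix (Fin n) (Fin n) F) (b : Fin n → F)
    (i j : Fin n) : borderZero B b i.castSucc j.castSucc = B i j := by
  simp [borderZero]

@[simp] lemma borderZero_castSucc_last (B : Matrix (Fin n) (Fin n) F) (b : Fin n → F)
    (i : Fin n) : borderZero B b i.castSucc (Fin.last n) = b i := by
  simp [borderZero]

@[simp] lemma borderZero_last_castSucc (B : Matrix (Fin n) (Fin n) F) (b : Fin n → F)
    (j : Fin n) : borderZero B b (Fin.last n) j.castSucc = b j := by
  simp [borderZero]

@[simp] lemma borderZero_last_last (B : Matrix (Fin n) (Fin n) F) (b : Fin n → F) :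
    borderZero B b (Fin.last n) (Fin.last n) = 0 := by
  simp [borderZero]

lemma borderZero_mem_symmHollowF2Indep [Algebra (ZMod 2) F] {B : Matrix (Fin n) (Fin n) F}
    (hB : B ∈ symmHollowF2Indep (Fin n) F) {b : Fin n → F}
    (hb : b ∉ Submodule.span (ZMod 2) (Set.range fun i => B i)) :
    borderZero B b ∈ symmHollowF2Indep (Fin (n + 1)) F := by
  obtain ⟨hsymm, hdiag, hindep⟩ := hB
  refine ⟨IsSymm.ext fun i j => ?_, fun i => ?_, ?_⟩
  · induction i using Fin.lastCases <;> induction j using Fin.lastCases <;> simp [hsymm.apply]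
  · induction i using Fin.lastCases <;> simp [hdiag]
  · let restrict : (Fin (n + 1) → F) →ₗ[ZMod 2] (Fin n → F) :=
      LinearMap.funLeft _ _ Fin.castSucc
    have hrestrict (x : Fin n → F) (y : F) : restrict (Fin.snoc x y) = x := by
      ext j; simp [restrict]
    have hrows : (fun i => borderZero B b i) =
        Fin.snoc (fun i => (Fin.snoc (B i) (b i) : Fin (n + 1) → F)) (Fin.snoc b 0) := rfl
    rw [hrows, linearIndependent_finSnoc]
    refine ⟨LinearIndependent.of_comp restrict ?_, fun hmem => hb ?_⟩
    · simpa [Function.comp_def, hrestrict] using hindep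
    · have := Submodule.apply_mem_span_image_of_mem_span restrict hmem
      simpa only [← Set.range_comp, Function.comp_def, hrestrict] using this

end Border

lemma sub_le_card_notMem_span {R M ι : Type*} [Ring R] [Fintype R] [AddCommGroup M]
    [Module R M] [Fintype M] [Fintype ι] (v : ι → M) :
    Fintype.card M - Fintype.card R ^ Fintype.card ι
      ≤ Nat.card {x // x ∉ Submodule.span R (Set.range v)} := by
  classical
  have hspan : Fintype.card (Submodule.span R (Set.range v))
      ≤ Fintype.card R ^ Fintype.card ι := by
    rw [← Nat.card_eq_fintype_card, ← Fintype.range_linearCombination, ← Fintype.card_fun,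
      ← Nat.card_eq_fintype_card]
    exact Finite.card_range_le _
  rw [Nat.card_eq_fintype_card, Fintype.card_subtype_compl]
  exact Nat.sub_le_sub_left hspan _

lemma card_symmHollowF2Indep_succ {F : Type*} [Field F] [Fintype F] [Algebra (ZMod 2) F]
    (n : ℕ) : (Fintype.card F ^ n - 2 ^ n) * Nat.card (symmHollowF2Indep (Fin n) F)
      ≤ Nat.card (symmHollowF2Indep (Fin (n + 1)) F) := by
  let S := symmHollowF2Indep (Fin n) F
  let _ : Fintype S := Fintype.ofFinite _
  let outside (B : S) :=
    {b : Fin n → F // b ∉ Submodule.span (ZMod 2) (Set.range fun i => B.1 i)}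
  let border (x : Σ B : S, outside B) : symmHollowF2Indep (Fin (n + 1)) F :=
    ⟨borderZero x.1 x.2, borderZero_mem_symmHollowF2Indep x.1.2 x.2.2⟩
  have border_injective : Function.Injective border := by
    rintro ⟨⟨B, hB⟩, b, hb⟩ ⟨⟨B', hB'⟩, b', hb'⟩ h
    have hM := congrArg Subtype.val h
    obtain rfl : B = B' := by
      ext i j; simpa [border] using congrFun (congrFun hM i.castSucc) j.castSucc
    obtain rfl : b = b' := by
      ext j; simpa [border] using congrFun (congrFun hM (Fin.last n)) j.castSucc
    rfl
  calc _ = ∑ _B : S, (Fintype.card F ^ n - 2 ^ n) := by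
        rw [sum_const, card_univ, smul_eq_mul, mul_comm, Nat.card_eq_fintype_card]
    _ ≤ ∑ B : S, Nat.card (outside B) := sum_le_sum fun B _ => by
        simpa using sub_le_card_notMem_span (R := ZMod 2) fun i => B.1 i
    _ = _ := Nat.card_sigma.symm
    _ ≤ _ := Nat.card_le_card_of_injective border border_injective

lemma pow_choose_two_mul_prod_one_sub (q : ℝ) (hq : q ≠ 0) (m : ℕ) :
    q ^ (2 * m).choose 2 * ∏ j ∈ Icc 1 m, (1 - q ^ ((1 : ℤ) - 2 * j))
      = ∏ j ∈ range m, (q ^ (2 * j + 1) - 1) * q ^ (2 * j) := by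
  induction m with
  | zero => simp
  | succ m ih =>
    have hchoose : (2 * (m + 1)).choose 2 = (2 * m).choose 2 + (2 * m + 1 + 2 * m) := by
      simp [Nat.mul_succ, Nat.choose_succ_succ, Nat.choose_one_right]; ring
    have hfactor : q ^ (2 * m + 1 + 2 * m) * (1 - q ^ ((1 : ℤ) - 2 * ↑(m + 1)))
        = (q ^ (2 * m + 1) - 1) * q ^ (2 * m) := by
      rw [show (1 : ℤ) - 2 * ↑(m + 1) = -↑(2 * m + 1) by push_cast; ring, _root_.zpow_neg,
        zpow_natCast, pow_add]
      field_simp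
    rw [prod_range_succ, ← ih, prod_Icc_succ_top (by omega), hchoose, pow_add, ← hfactor]
    ring

lemma two_eq_zero_of_algebra_zmod_two (R : Type*) [Semiring R] [Algebra (ZMod 2) R] :
    (2 : R) = 0 := by
  simpa only [map_ofNat, map_zero] using
    congrArg (algebraMap (ZMod 2) R) (show (2 : ZMod 2) = 0 from rfl)

lemma pow_choose_two_mul_prod_le_card_symmHollowF2Indep {F : Type*} [Field F] [Fintype F]
    [Algebra (ZMod 2) F] (m : ℕ) :
    (Fintype.card F : ℝ) ^ (2 * m).choose 2
        * ∏ j ∈ Icc 1 m, (1 - (Fintype.card F : ℝ) ^ ((1 : ℤ) - 2 * j))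
      ≤ Nat.card (symmHollowF2Indep (Fin (2 * m)) F) := by
  rw [pow_choose_two_mul_prod_one_sub _ (by positivity)]
  have hcard := (prod_le_card_symmHollowUnits (two_eq_zero_of_algebra_zmod_two F) m).trans
    (Nat.card_mono (Set.toFinite _) (symmHollowUnits_subset_symmHollowF2Indep (Fin (2 * m)) F))
  refine le_of_eq_of_le ?_ (Nat.cast_le.mpr hcard)
  push_cast [Nat.cast_sub (Nat.one_le_pow _ _ Fintype.card_pos)]
  rfl

theorem stmt9_general (d n : ℕ)
    (F : Type) [Field F] [Fintype F] [Algebra (ZMod 2) F]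
    (hF : Fintype.card F = 2 ^ d) :
    (Even n →
      ((2 : ℝ) ^ d) ^ (n * (n - 1) / 2)
          * ∏ j ∈ Finset.Icc 1 (n / 2), (1 - ((2 : ℝ) ^ d) ^ ((1 : ℤ) - 2 * (j : ℤ)))
        ≤ (Nat.card {M : Matrix (Fin n) (Fin n) F //
            M.IsSymm ∧ (∀ i, M i i = 0) ∧
            LinearIndependent (ZMod 2) (fun i => M i)} : ℝ)) ∧
    (Odd n →
      (((2 : ℝ) ^ (d * (n - 1)) - 2 ^ (n - 1))
          * ((2 : ℝ) ^ d) ^ ((n - 1) * (n - 2) / 2)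
          * ∏ j ∈ Finset.Icc 1 ((n - 1) / 2), (1 - ((2 : ℝ) ^ d) ^ ((1 : ℤ) - 2 * (j : ℤ))))
        ≤ (Nat.card {M : Matrix (Fin n) (Fin n) F //
            M.IsSymm ∧ (∀ i, M i i = 0) ∧
            LinearIndependent (ZMod 2) (fun i => M i)} : ℝ)) := by
  have hq : (2 : ℝ) ^ d = Fintype.card F := by rw [hF]; push_cast; rfl
  constructor
  · rintro ⟨m, rfl⟩
    rw [← two_mul, ← Nat.choose_two_right, Nat.mul_div_cancel_left m two_pos, hq]
    exact pow_choose_two_mul_prod_le_card_symmHollowF2Indep m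
  · rintro ⟨m, rfl⟩
    rw [Nat.add_sub_cancel, show 2 * m + 1 - 2 = 2 * m - 1 by omega, ← Nat.choose_two_right,
      Nat.mul_div_cancel_left m two_pos, pow_mul, hq, mul_assoc]
    have hsub : (Fintype.card F : ℝ) ^ (2 * m) - 2 ^ (2 * m)
        = ((Fintype.card F ^ (2 * m) - 2 ^ (2 * m) : ℕ) : ℝ) := by
      push_cast [Nat.cast_sub (Nat.pow_le_pow_left Fintype.one_lt_card _)]; rfl
    rw [hsub]
    calc _ ≤ ((Fintype.card F ^ (2 * m) - 2 ^ (2 * m) : ℕ) : ℝ)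
          * Nat.card (symmHollowF2Indep (Fin (2 * m)) F) := by
          gcongr; exact pow_choose_two_mul_prod_le_card_symmHollowF2Indep m
      _ ≤ _ := by exact_mod_cast card_symmHollowF2Indep_succ (2 * m)

/-- The number of `n × n` symmetric zero-diagonal matrices over `F_{2^d}`
which are full rank over `F₂` is at least `ν(n,d)`, where (with `q = 2^d`)
`ν(n,d) = q^{n(n-1)/2} ∏_{j=1}^{⌈(n-1)/2⌉}(1-q^{1-2j})` for `n` even, and
`ν(n,d) = (q^{n-1}-2^{n-1}) q^{(n-1)(n-2)/2} ∏_{j=1}^{⌈(n-2)/2⌉}(1-q^{1-2j})` for `n` odd.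
(For `n` even `⌈(n-1)/2⌉ = n/2`; for `n` odd `⌈(n-2)/2⌉ = (n-1)/2`.) -/
theorem stmt9 (d n : ℕ) (hd : 1 ≤ d) (hn : 2 ≤ n)
    (F : Type) [Field F] [Fintype F] [Algebra (ZMod 2) F]
    (hF : Fintype.card F = 2 ^ d) :
    (Even n →
      ((2 : ℝ) ^ d) ^ (n * (n - 1) / 2)
          * ∏ j ∈ Finset.Icc 1 (n / 2), (1 - ((2 : ℝ) ^ d) ^ ((1 : ℤ) - 2 * (j : ℤ)))
        ≤ (Nat.card {M : Matrix (Fin n) (Fin n) F //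
            M.IsSymm ∧ (∀ i, M i i = 0) ∧
            LinearIndependent (ZMod 2) (fun i => M i)} : ℝ)) ∧
    (Odd n →
      (((2 : ℝ) ^ (d * (n - 1)) - 2 ^ (n - 1))
          * ((2 : ℝ) ^ d) ^ ((n - 1) * (n - 2) / 2)
          * ∏ j ∈ Finset.Icc 1 ((n - 1) / 2), (1 - ((2 : ℝ) ^ d) ^ ((1 : ℤ) - 2 * (j : ℤ))))
        ≤ (Nat.card {M : Matrix (Fin n) (Fin n) F //
            M.IsSymm ∧ (∀ i, M i i = 0) ∧
            LinearIndependent (ZMod 2) (fun i => M i)} : ℝ)) :=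
  stmt9_general d n F hF
end

section
/- For n = 3, the number of 3×3 symmetric zero-diagonal matrices over F_{2^d} that are full rank over F_2 equals (2^d + 3)(2^d − 1)(2^d − 2). -/
/-!
Write the matrix as `!![0, y, z; y, 0, x; z, x, 0]`. In characteristic two, `(a, c, b)` is a
kernel vector of the rows whenever `x = a • w`, `y = b • w`, `z = c • w`; conversely a nonzero
`F₂`-kernel vector forces `x, y, z ∈ {0, w}` for a single `w`. So the rows are independent iff
`(x, y, z)` avoids every cube `{0, w}³`. These cubes meet only in `0` and each has `7` nonzero
points, so `7 (q - 1) + 1` of the `q³` triples are bad, and `q³ - 7q + 6 = (q + 3)(q - 1)(q - 2)`.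
-/

open Finset Submodule

variable {A : Type*}

section binaryCube

variable [Zero A] [DecidableEq A]

def binaryCube (w : A) : Finset (A × A × A) := {0, w} ×ˢ {0, w} ×ˢ {0, w}

lemma mem_binaryCube {w : A} {v : A × A × A} :
    v ∈ binaryCube w ↔
      (v.1 = 0 ∨ v.1 = w) ∧ (v.2.1 = 0 ∨ v.2.1 = w) ∧ (v.2.2 = 0 ∨ v.2.2 = w) := by
  simp [binaryCube]

lemma card_binaryCube_erase_zero {w : A} (hw : w ≠ 0) : #((binaryCube w).erase 0) = 7 := by
  rw [card_erase_of_mem (by simp [binaryCube]), binaryCube, card_product, card_product,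
    card_pair hw.symm]

lemma pairwiseDisjoint_binaryCube_erase_zero :
    (Set.univ : Set A).PairwiseDisjoint fun w => (binaryCube w).erase 0 := by
  intro w _ w' _ hww'
  have eq_zero : ∀ t : A, (t = 0 ∨ t = w) → (t = 0 ∨ t = w') → t = 0 := by
    rintro t (h | rfl) (h' | rfl)
    exacts [h, h, h', absurd rfl hww']
  rw [Function.onFun, disjoint_left]
  rintro ⟨a, b, c⟩ hv hv'
  simp only [mem_erase, mem_binaryCube] at hv hv'
  exact hv.1 (Prod.ext (eq_zero a hv.2.1 hv'.2.1)
    (Prod.ext (eq_zero b hv.2.2.1 hv'.2.2.1) (eq_zero c hv.2.2.2 hv'.2.2.2)))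

variable [Fintype A]

lemma biUnion_binaryCube :
    univ.biUnion binaryCube =
      insert 0 ((univ.erase (0 : A)).biUnion fun w => (binaryCube w).erase 0) := by
  ext v
  simp only [mem_biUnion, mem_univ, true_and, mem_insert, mem_erase, and_true]
  constructor
  · rintro ⟨w, hv⟩
    by_cases hv0 : v = 0
    · exact .inl hv0
    · refine .inr ⟨w, fun hw => hv0 ?_, hv0, hv⟩
      subst hw
      obtain ⟨h1, h2, h3⟩ := mem_binaryCube.1 hv
      simp only [or_self] at h1 h2 h3
      exact Prod.ext h1 (Prod.ext h2 h3)
  · rintro (rfl | ⟨w, -, -, hv⟩)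
    exacts [⟨0, mem_binaryCube.2 (by simp)⟩, ⟨w, hv⟩]

lemma card_biUnion_binaryCube :
    #(univ.biUnion (binaryCube (A := A))) = 7 * (Fintype.card A - 1) + 1 := by
  rw [biUnion_binaryCube, card_insert_of_notMem (by simp), card_biUnion
    (pairwiseDisjoint_binaryCube_erase_zero.subset (Set.subset_univ _)),
    sum_congr rfl fun w hw => card_binaryCube_erase_zero (ne_of_mem_erase hw), sum_const,
    card_erase_of_mem (mem_univ _), card_univ, smul_eq_mul, mul_comm]

end binaryCube

section hollowSymm

variable [Zero A]

def hollowSymm (x y z : A) : Matrix (Fin 3) (Fin 3) A := !![0, y, z; y, 0, x; z, x, 0]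

lemma eq_hollowSymm {M : Matrix (Fin 3) (Fin 3) A} (hs : M.IsSymm) (hd : ∀ i, M i i = 0) :
    M = hollowSymm (M 1 2) (M 0 1) (M 0 2) := by
  ext i j
  fin_cases i <;> fin_cases j
  all_goals first | exact hd _ | rfl | exact hs.apply _ _

def hollowSymmEquiv (P : Matrix (Fin 3) (Fin 3) A → Prop) :
    {M : Matrix (Fin 3) (Fin 3) A // M.IsSymm ∧ (∀ i, M i i = 0) ∧ P M} ≃
      {v : A × A × A // P (hollowSymm v.1 v.2.1 v.2.2)} where
  toFun M := ⟨(M.1 1 2, M.1 0 1, M.1 0 2), eq_hollowSymm M.2.1 M.2.2.1 ▸ M.2.2.2⟩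
  invFun v := ⟨hollowSymm v.1.1 v.1.2.1 v.1.2.2,
    ⟨by ext i j; fin_cases i <;> fin_cases j <;> rfl, fun i => by fin_cases i <;> rfl, v.2⟩⟩
  left_inv M := Subtype.ext (eq_hollowSymm M.2.1 M.2.2.1).symm
  right_inv _ := rfl

end hollowSymm

lemma ZMod.two_eq_zero_or_one (a : ZMod 2) : a = 0 ∨ a = 1 := by decide +revert

lemma Nat.cube_sub_seven_mul_pred_add_one (q : ℕ) :
    q ^ 3 - (7 * (q - 1) + 1) = (q + 3) * (q - 1) * (q - 2) := by
  rcases q with _ | _ | m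
  · rfl
  · rfl
  · rw [Nat.add_one_sub_one, show m + 1 + 1 - 2 = m by omega]
    apply Nat.sub_eq_of_eq_add
    ring

section ZModTwoModule

variable [AddCommGroup A] [Module (ZMod 2) A]

lemma ZModModule.eq_of_add_eq_zero {x y : A} (h : x + y = 0) : x = y := by
  rwa [add_eq_zero_iff_eq_neg, ZModModule.neg_eq_self] at h

lemma mem_span_singleton_zmod_two {x w : A} : x ∈ ZMod 2 ∙ w ↔ x = 0 ∨ x = w := by
  rw [mem_span_singleton]
  constructor
  · rintro ⟨a, rfl⟩
    rcases a.two_eq_zero_or_one with rfl | rfl <;> simp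
  · rintro (rfl | rfl)
    exacts [⟨0, zero_smul _ _⟩, ⟨1, one_smul _ _⟩]

theorem linearIndependent_hollowSymm_iff (x y z : A) :
    LinearIndependent (ZMod 2) (fun i => hollowSymm x y z i) ↔
      ¬∃ w : A, x ∈ ZMod 2 ∙ w ∧ y ∈ ZMod 2 ∙ w ∧ z ∈ ZMod 2 ∙ w := by
  simp only [Fintype.linearIndependent_iff, mem_span_singleton]
  constructor
  · rintro hli ⟨w, ⟨a, rfl⟩, ⟨b, rfl⟩, ⟨c, rfl⟩⟩
    by_cases habc : a = 0 ∧ b = 0 ∧ c = 0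
    · obtain ⟨rfl, rfl, rfl⟩ := habc
      exact one_ne_zero (hli ![1, 0, 0]
        (by ext j; fin_cases j <;> simp [Fin.sum_univ_three, hollowSymm]) 0)
    · have := hli ![a, c, b] (by
        ext j; fin_cases j <;>
          simp [Fin.sum_univ_three, hollowSymm, smul_smul, mul_comm, ZModModule.add_self])
      exact habc ⟨this 0, this 2, this 1⟩
  · intro hbad g hg
    obtain ⟨e0, e1, e2⟩ :
        g 1 • y + g 2 • z = 0 ∧ g 0 • y + g 2 • x = 0 ∧ g 0 • z + g 1 • x = 0 :=
      ⟨by simpa [Fin.sum_univ_three, hollowSymm] using congrFun hg 0,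
        by simpa [Fin.sum_univ_three, hollowSymm] using congrFun hg 1,
        by simpa [Fin.sum_univ_three, hollowSymm] using congrFun hg 2⟩
    rcases (g 0).two_eq_zero_or_one with h0 | h0
    · rcases (g 1).two_eq_zero_or_one with h1 | h1
      · rcases (g 2).two_eq_zero_or_one with h2 | h2
        · intro i; fin_cases i <;> assumption
        · simp only [h0, h1, h2, zero_smul, one_smul, zero_add] at e0 e1
          exact (hbad ⟨y, ⟨0, by rw [zero_smul, e1]⟩, ⟨1, one_smul _ _⟩,
            ⟨0, by rw [zero_smul, e0]⟩⟩).elim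
      · simp only [h0, h1, zero_smul, one_smul, zero_add] at e0 e2
        exact (hbad ⟨z, ⟨0, by rw [zero_smul, e2]⟩,
          ⟨g 2, (ZModModule.eq_of_add_eq_zero e0).symm⟩, ⟨1, one_smul _ _⟩⟩).elim
    · simp only [h0, one_smul] at e1 e2
      exact (hbad ⟨x, ⟨1, one_smul _ _⟩, ⟨g 2, (ZModModule.eq_of_add_eq_zero e1).symm⟩,
        ⟨g 1, (ZModModule.eq_of_add_eq_zero e2).symm⟩⟩).elim

theorem card_linearIndependent_hollowSymm [Fintype A] :
    Nat.card {v : A × A × A //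
        LinearIndependent (ZMod 2) fun i => hollowSymm v.1 v.2.1 v.2.2 i} =
      (Fintype.card A + 3) * (Fintype.card A - 1) * (Fintype.card A - 2) := by
  classical
  have h : ∀ v : A × A × A,
      (LinearIndependent (ZMod 2) fun i => hollowSymm v.1 v.2.1 v.2.2 i) ↔
        v ∉ univ.biUnion binaryCube := fun v => by
    simp [linearIndependent_hollowSymm_iff, mem_span_singleton_zmod_two, mem_binaryCube]
  rw [Nat.card_congr (Equiv.subtypeEquivRight h), Nat.card_eq_fintype_card,
    Fintype.card_subtype_compl, Fintype.card_coe, card_biUnion_binaryCube, Fintype.card_prod,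
    Fintype.card_prod, ← Nat.cube_sub_seven_mul_pred_add_one, pow_three]

end ZModTwoModule

theorem stmt11_general (d : ℕ)
    (F : Type) [Field F] [Fintype F] [Algebra (ZMod 2) F]
    (hF : Fintype.card F = 2 ^ d) :
    Nat.card {M : Matrix (Fin 3) (Fin 3) F //
        M.IsSymm ∧ (∀ i, M i i = 0) ∧
        LinearIndependent (ZMod 2) (fun i => M i)}
      = (2 ^ d + 3) * (2 ^ d - 1) * (2 ^ d - 2) := by
  rw [← hF]
  exact (Nat.card_congr (hollowSymmEquiv _)).trans card_linearIndependent_hollowSymm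

/-- The number of `3 × 3` symmetric zero-diagonal matrices over `F_{2^d}`
that are full rank over `F₂` equals `(2^d + 3)(2^d - 1)(2^d - 2)`. -/
theorem stmt11 (d : ℕ) (hd : 1 ≤ d)
    (F : Type) [Field F] [Fintype F] [Algebra (ZMod 2) F]
    (hF : Fintype.card F = 2 ^ d) :
    Nat.card {M : Matrix (Fin 3) (Fin 3) F //
        M.IsSymm ∧ (∀ i, M i i = 0) ∧
        LinearIndependent (ZMod 2) (fun i => M i)}
      = (2 ^ d + 3) * (2 ^ d - 1) * (2 ^ d - 2) :=
  stmt11_general d F hF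
end

section
/- Let μ(n,d) = 2^{dC(n,2)} − 1 − Σ_{r=1}^{n−2} C(n,r)(2^d − 1)^{C(n−r,2)} and let ν(n,d) be the lower bound of Proposition (even/odd cases as stated). Then for d ≥ 2: if n is even, μ(n,d)/ν(n,d) ≤ ∏_{j=1}^∞ 1/(1 − q^{1−2j}) ≤ e^{(q+1)/(q(q−1))}, and if n is odd, μ(n,d)/ν(n,d) ≤ 2∏_{j=1}^∞ 1/(1 − q^{1−2j}) ≤ 2e^{(q+1)/(q(q−1))}, where q = 2^d. -/
/-!
Since `μ(n,d) ≤ q^{C(n,2)}`, the ratio `μ/ν` is at most the reciprocal of the finite product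
`∏_{j ≤ m} (1 - q^{1-2j})`; for odd `n` one first absorbs `q^{n-1} ≤ 2 (q^{n-1} - 2^{n-1})`,
which is `2^n ≤ 2^{d(n-1)}`. For `0 ≤ x_j ≤ c < 1` with `∑ x_j` finite, `log (1 - x)⁻¹ ≤ x/(1 - c)`
shows that `∏ (1 - x_j)⁻¹` converges, dominates its partial products and is at most
`exp (∑ x_j / (1 - c))`. With `x_j = q^{-(2j+1)}` and `c = q⁻¹` the exponent is
`q² / ((q - 1)(q² - 1))`, which is at most `(q + 1)/(q(q - 1))` because `q² ≥ q + 1`.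
-/

/-- The upper bound `μ(n,d) = 2^{d·C(n,2)} - 1 - Σ_{r=1}^{n-2} C(n,r)(2^d-1)^{C(n-r,2)}`. -/
noncomputable def muBound (n d : ℕ) : ℝ :=
  2 ^ (d * (n * (n - 1) / 2)) - 1
    - ∑ r ∈ Finset.Icc 1 (n - 2),
        (n.choose r : ℝ) * ((2 : ℝ) ^ d - 1) ^ ((n - r) * (n - r - 1) / 2)

/-- The lower bound `ν(n,d)` (with `q = 2^d`):
`q^{C(n,2)} ∏_{j=1}^{⌈(n-1)/2⌉}(1-q^{1-2j})` for `n` even, and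
`(q^{n-1}-2^{n-1}) q^{C(n-1,2)} ∏_{j=1}^{⌈(n-2)/2⌉}(1-q^{1-2j})` for `n` odd. -/
noncomputable def nuBound (n d : ℕ) : ℝ :=
  if Even n then
    ((2 : ℝ) ^ d) ^ (n * (n - 1) / 2)
      * ∏ j ∈ Finset.Icc 1 (n / 2), (1 - ((2 : ℝ) ^ d) ^ ((1 : ℤ) - 2 * (j : ℤ)))
  else
    ((2 : ℝ) ^ (d * (n - 1)) - 2 ^ (n - 1))
      * ((2 : ℝ) ^ d) ^ ((n - 1) * (n - 2) / 2)
      * ∏ j ∈ Finset.Icc 1 ((n - 1) / 2), (1 - ((2 : ℝ) ^ d) ^ ((1 : ℤ) - 2 * (j : ℤ)))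

open Finset Real

lemma log_inv_one_sub_le {x c : ℝ} (hx : 0 ≤ x) (hxc : x ≤ c) (hc : c < 1) :
    log (1 - x)⁻¹ ≤ x / (1 - c) := by
  have hx1 : 0 < 1 - x := by linarith
  calc log (1 - x)⁻¹ ≤ (1 - x)⁻¹ - 1 := log_le_sub_one_of_pos (inv_pos.mpr hx1)
    _ = x / (1 - x) := by field_simp; ring
    _ ≤ x / (1 - c) := div_le_div_of_nonneg_left hx (by linarith) (by linarith)

lemma log_inv_one_sub_nonneg {x : ℝ} (hx : 0 ≤ x) (hx1 : x < 1) : 0 ≤ log (1 - x)⁻¹ :=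
  log_nonneg <| (one_le_inv₀ (by linarith)).mpr (by linarith)

section InvOneSubProduct

variable {ι : Type*} {x : ι → ℝ} {c : ℝ}

lemma summable_log_inv_one_sub (hx : ∀ i, 0 ≤ x i) (hxc : ∀ i, x i ≤ c) (hc : c < 1)
    (hsum : Summable x) : Summable fun i ↦ log (1 - x i)⁻¹ :=
  (hsum.div_const (1 - c)).of_nonneg_of_le
    (fun i ↦ log_inv_one_sub_nonneg (hx i) ((hxc i).trans_lt hc))
    (fun i ↦ log_inv_one_sub_le (hx i) (hxc i) hc)

lemma exp_tsum_log_inv_one_sub (hxc : ∀ i, x i ≤ c) (hc : c < 1)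
    (hlog : Summable fun i ↦ log (1 - x i)⁻¹) :
    exp (∑' i, log (1 - x i)⁻¹) = ∏' i, (1 - x i)⁻¹ :=
  rexp_tsum_eq_tprod (fun i ↦ inv_pos.mpr (by linarith [hxc i])) hlog

lemma prod_inv_one_sub_le_tprod (hx : ∀ i, 0 ≤ x i) (hxc : ∀ i, x i ≤ c) (hc : c < 1)
    (hsum : Summable x) (s : Finset ι) : ∏ i ∈ s, (1 - x i)⁻¹ ≤ ∏' i, (1 - x i)⁻¹ := by
  have hlog := summable_log_inv_one_sub hx hxc hc hsum
  calc ∏ i ∈ s, (1 - x i)⁻¹ = exp (∑ i ∈ s, log (1 - x i)⁻¹) := by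
        rw [exp_sum]
        exact prod_congr rfl fun i _ ↦ (exp_log (inv_pos.mpr (by linarith [hxc i]))).symm
    _ ≤ exp (∑' i, log (1 - x i)⁻¹) := exp_le_exp.mpr <| hlog.sum_le_tsum s fun i _ ↦
        log_inv_one_sub_nonneg (hx i) ((hxc i).trans_lt hc)
    _ = ∏' i, (1 - x i)⁻¹ := exp_tsum_log_inv_one_sub hxc hc hlog

lemma tprod_inv_one_sub_le_exp (hx : ∀ i, 0 ≤ x i) (hxc : ∀ i, x i ≤ c) (hc : c < 1)
    (hsum : Summable x) : ∏' i, (1 - x i)⁻¹ ≤ exp ((∑' i, x i) / (1 - c)) := by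
  have hlog := summable_log_inv_one_sub hx hxc hc hsum
  rw [← exp_tsum_log_inv_one_sub hxc hc hlog, ← tsum_div_const]
  exact exp_le_exp.mpr <| hlog.tsum_le_tsum (fun i ↦ log_inv_one_sub_le (hx i) (hxc i) hc)
    (hsum.div_const _)

end InvOneSubProduct

lemma zpow_one_sub_two_mul_succ (q : ℝ) (j : ℕ) :
    q ^ ((1 : ℤ) - 2 * ((j : ℤ) + 1)) = q⁻¹ * (q ^ 2)⁻¹ ^ j := by
  rw [show (1 : ℤ) - 2 * ((j : ℤ) + 1) = -((2 * j + 1 : ℕ) : ℤ) by push_cast; ring,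
    zpow_neg, zpow_natCast, pow_succ, pow_mul, mul_inv, inv_pow, mul_comm]

section OddPowers

variable {q : ℝ}

lemma summable_zpow_one_sub_two_mul_succ (hq : 1 < q) :
    Summable fun j : ℕ ↦ q ^ ((1 : ℤ) - 2 * ((j : ℤ) + 1)) := by
  simp only [zpow_one_sub_two_mul_succ]
  exact (summable_geometric_of_lt_one (by positivity)
    (inv_lt_one_of_one_lt₀ (one_lt_pow₀ hq two_ne_zero))).mul_left _

lemma tsum_zpow_one_sub_two_mul_succ (hq : 1 < q) :
    ∑' j : ℕ, q ^ ((1 : ℤ) - 2 * ((j : ℤ) + 1)) = q / (q ^ 2 - 1) := by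
  simp only [zpow_one_sub_two_mul_succ]
  rw [tsum_mul_left, tsum_geometric_of_lt_one (by positivity)
    (inv_lt_one_of_one_lt₀ (one_lt_pow₀ hq two_ne_zero))]
  have : q ^ 2 - 1 ≠ 0 := by nlinarith
  field_simp

lemma zpow_one_sub_two_mul_succ_le (hq : 1 < q) (j : ℕ) :
    q ^ ((1 : ℤ) - 2 * ((j : ℤ) + 1)) ≤ q⁻¹ := by
  rw [← zpow_neg_one]
  exact zpow_le_zpow_right₀ hq.le (by omega)

lemma prod_one_sub_zpow_pos (hq : 1 < q) (m : ℕ) :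
    0 < ∏ j ∈ Icc 1 m, (1 - q ^ ((1 : ℤ) - 2 * (j : ℤ))) :=
  prod_pos fun j hj ↦ sub_pos.mpr <| zpow_lt_one_of_neg₀ hq (by simp at hj; omega)

lemma inv_prod_one_sub_zpow_le_tprod (hq : 1 < q) (m : ℕ) :
    (∏ j ∈ Icc 1 m, (1 - q ^ ((1 : ℤ) - 2 * (j : ℤ))))⁻¹
      ≤ ∏' j : ℕ, (1 - q ^ ((1 : ℤ) - 2 * ((j : ℤ) + 1)))⁻¹ := by
  rw [← prod_inv_distrib, ← Ico_add_one_right_eq_Icc, prod_Ico_eq_prod_range,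
    add_tsub_cancel_right]
  simp only [Nat.cast_add, Nat.cast_one, add_comm (1 : ℤ)]
  exact prod_inv_one_sub_le_tprod (fun j ↦ zpow_nonneg (by linarith) _)
    (zpow_one_sub_two_mul_succ_le hq) (inv_lt_one_of_one_lt₀ hq)
    (summable_zpow_one_sub_two_mul_succ hq) (range m)

lemma tprod_inv_one_sub_zpow_le_exp (hq : 2 ≤ q) :
    ∏' j : ℕ, (1 - q ^ ((1 : ℤ) - 2 * ((j : ℤ) + 1)))⁻¹ ≤ exp ((q + 1) / (q * (q - 1))) := by
  have hq1 : 1 < q := by linarith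
  refine (tprod_inv_one_sub_le_exp (fun j ↦ zpow_nonneg (by linarith) _)
    (zpow_one_sub_two_mul_succ_le hq1) (inv_lt_one_of_one_lt₀ hq1)
    (summable_zpow_one_sub_two_mul_succ hq1)).trans (exp_le_exp.mpr ?_)
  have : q / (q ^ 2 - 1) / (1 - q⁻¹) = q ^ 2 / ((q ^ 2 - 1) * (q - 1)) := by
    have : q ≠ 0 := by positivity
    have : q - 1 ≠ 0 := by linarith
    field_simp
  rw [tsum_zpow_one_sub_two_mul_succ hq1, this, div_le_div_iff₀ (by nlinarith) (by nlinarith)]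
  nlinarith

end OddPowers

lemma muBound_le (n d : ℕ) : muBound n d ≤ ((2 : ℝ) ^ d) ^ (n * (n - 1) / 2) := by
  rw [muBound, ← pow_mul, sub_sub]
  have : (1 : ℝ) ≤ 2 ^ d := one_le_pow₀ one_le_two
  refine sub_le_self _ (add_nonneg zero_le_one (sum_nonneg fun r _ ↦ ?_))
  exact mul_nonneg (Nat.cast_nonneg _) (pow_nonneg (by linarith) _)

lemma muBound_div_nuBound_le_of_even {n d : ℕ} (hd : 1 ≤ d) (hn : Even n) :
    muBound n d / nuBound n d
      ≤ (∏ j ∈ Icc 1 (n / 2), (1 - ((2 : ℝ) ^ d) ^ ((1 : ℤ) - 2 * (j : ℤ))))⁻¹ := by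
  have hq : (1 : ℝ) < 2 ^ d := one_lt_pow₀ one_lt_two (by omega)
  have hP := prod_one_sub_zpow_pos hq (n / 2)
  rw [nuBound, if_pos hn, ← div_div]
  calc muBound n d / ((2 : ℝ) ^ d) ^ (n * (n - 1) / 2) / _ ≤ 1 / _ := by
        gcongr
        exact div_le_one_of_le₀ (muBound_le n d) (by positivity)
    _ = _ := one_div _

lemma Nat.mul_sub_one_div_two_eq (n : ℕ) :
    n * (n - 1) / 2 = (n - 1) + (n - 1) * (n - 2) / 2 := by
  cases n with
  | zero => rfl
  | succ k =>
    have h := Nat.choose_succ_succ' k 1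
    rw [Nat.choose_two_right, Nat.choose_two_right, Nat.choose_one_right] at h
    simpa [show k + 1 - 2 = k - 1 by omega] using h

lemma muBound_div_nuBound_le_of_odd {n d : ℕ} (hn : 2 ≤ n) (hd : 2 ≤ d) (ho : Odd n) :
    muBound n d / nuBound n d
      ≤ 2 * (∏ j ∈ Icc 1 ((n - 1) / 2), (1 - ((2 : ℝ) ^ d) ^ ((1 : ℤ) - 2 * (j : ℤ))))⁻¹ := by
  have hq : (1 : ℝ) < 2 ^ d := one_lt_pow₀ one_lt_two (by omega)
  set P := ∏ j ∈ Icc 1 ((n - 1) / 2), (1 - ((2 : ℝ) ^ d) ^ ((1 : ℤ) - 2 * (j : ℤ)))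
  set A : ℝ := 2 ^ (d * (n - 1)) - 2 ^ (n - 1)
  set Q : ℝ := ((2 : ℝ) ^ d) ^ ((n - 1) * (n - 2) / 2)
  have hP : 0 < P := prod_one_sub_zpow_pos hq _
  have hQ : 0 < Q := by positivity
  have hA : ((2 : ℝ) ^ d) ^ (n - 1) ≤ 2 * A := by
    have : (2 : ℝ) ^ n ≤ 2 ^ (d * (n - 1)) := pow_le_pow_right₀ one_le_two <| by
      have := Nat.mul_le_mul_right (n - 1) hd
      omega
    rw [← pow_mul]
    have : (2 : ℝ) ^ n = 2 * 2 ^ (n - 1) := by rw [← pow_succ', Nat.sub_add_cancel (by omega)]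
    linarith
  have hA0 : 0 < A := by linarith [show 0 < ((2 : ℝ) ^ d) ^ (n - 1) by positivity]
  rw [nuBound, if_neg (Nat.not_even_iff_odd.mpr ho)]
  calc muBound n d / (A * Q * P) ≤ (2 * A) * Q / (A * Q * P) := by
        gcongr
        calc muBound n d ≤ ((2 : ℝ) ^ d) ^ (n * (n - 1) / 2) := muBound_le n d
          _ = ((2 : ℝ) ^ d) ^ (n - 1) * Q := by rw [Nat.mul_sub_one_div_two_eq, pow_add]
          _ ≤ 2 * A * Q := by gcongr
    _ = 2 * P⁻¹ := by field_simp

/-- For `d ≥ 2` and `q = 2^d`: if `n` is even then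
`μ(n,d)/ν(n,d) ≤ ∏_{j=1}^∞ 1/(1-q^{1-2j}) ≤ e^{(q+1)/(q(q-1))}`, and if `n` is odd then
`μ(n,d)/ν(n,d) ≤ 2∏_{j=1}^∞ 1/(1-q^{1-2j}) ≤ 2e^{(q+1)/(q(q-1))}`. -/
theorem stmt14 (n d : ℕ) (hn : 2 ≤ n) (hd : 2 ≤ d) :
    (Even n →
      muBound n d / nuBound n d
          ≤ ∏' j : ℕ, (1 - ((2 : ℝ) ^ d) ^ ((1 : ℤ) - 2 * ((j : ℤ) + 1)))⁻¹ ∧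
      (∏' j : ℕ, (1 - ((2 : ℝ) ^ d) ^ ((1 : ℤ) - 2 * ((j : ℤ) + 1)))⁻¹)
          ≤ Real.exp (((2 : ℝ) ^ d + 1) / ((2 : ℝ) ^ d * ((2 : ℝ) ^ d - 1)))) ∧
    (Odd n →
      muBound n d / nuBound n d
          ≤ 2 * ∏' j : ℕ, (1 - ((2 : ℝ) ^ d) ^ ((1 : ℤ) - 2 * ((j : ℤ) + 1)))⁻¹ ∧
      (2 * ∏' j : ℕ, (1 - ((2 : ℝ) ^ d) ^ ((1 : ℤ) - 2 * ((j : ℤ) + 1)))⁻¹)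
          ≤ 2 * Real.exp (((2 : ℝ) ^ d + 1) / ((2 : ℝ) ^ d * ((2 : ℝ) ^ d - 1)))) := by
  have hq : (2 : ℝ) ≤ 2 ^ d := le_self_pow₀ one_le_two (by omega)
  have hq1 : (1 : ℝ) < 2 ^ d := by linarith
  have hexp := tprod_inv_one_sub_zpow_le_exp hq
  refine ⟨fun he ↦ ⟨?_, hexp⟩, fun ho ↦ ⟨?_, by linarith⟩⟩
  · exact (muBound_div_nuBound_le_of_even (by omega) he).trans
      (inv_prod_one_sub_zpow_le_tprod hq1 _)
  · exact (muBound_div_nuBound_le_of_odd hn hd ho).trans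
      (by linarith [inv_prod_one_sub_zpow_le_tprod hq1 ((n - 1) / 2)])
end

section
/- With q = 2^d fixed (d ≥ 2), the ratio μ(n,d)/ν(n,d) tends to ∏_{j=1}^∞ 1/(1 − q^{1−2j}) as n → ∞; and for n fixed, μ(n,d)/ν(n,d) → 1 as d → ∞. -/
open Filter Finset Topology

lemma mul_pred_div_two_eq (m : ℕ) :
    m * (m - 1) / 2 = (m - 1) * (m - 2) / 2 + (m - 1) := by
  rcases m with _ | k
  · rfl
  · rw [← Nat.choose_two_right, show k + 1 - 1 = k by omega, show k + 1 - 2 = k - 1 by omega,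
      ← Nat.choose_two_right, Nat.choose_succ_succ' k 1, Nat.choose_one_right, add_comm]

lemma one_add_sum_choose_Icc_le_two_pow (m : ℕ) :
    1 + ∑ r ∈ Icc 1 (m - 2), m.choose r ≤ 2 ^ m :=
  calc 1 + ∑ r ∈ Icc 1 (m - 2), m.choose r = ∑ r ∈ insert 0 (Icc 1 (m - 2)), m.choose r := by
        rw [sum_insert (by simp), Nat.choose_zero_right]
    _ ≤ ∑ r ∈ range (m + 1), m.choose r :=
        sum_le_sum_of_subset fun r hr => by simp only [mem_insert, mem_Icc] at hr; simp; omega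
    _ = 2 ^ m := Nat.sum_range_choose m

lemma one_add_sum_choose_mul_pow_le {q : ℝ} (hq : 1 ≤ q) (m : ℕ) :
    1 + ∑ r ∈ Icc 1 (m - 2), (m.choose r : ℝ) * (q - 1) ^ ((m - r) * (m - r - 1) / 2)
      ≤ 2 ^ m * q ^ ((m - 1) * (m - 2) / 2) := by
  set E := (m - 1) * (m - 2) / 2
  have hterm : ∀ r ∈ Icc 1 (m - 2),
      (m.choose r : ℝ) * (q - 1) ^ ((m - r) * (m - r - 1) / 2) ≤ m.choose r * q ^ E := by
    intro r hr
    have hr1 := (mem_Icc.mp hr).1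
    refine mul_le_mul_of_nonneg_left ?_ (by positivity)
    calc (q - 1) ^ ((m - r) * (m - r - 1) / 2) ≤ q ^ ((m - r) * (m - r - 1) / 2) :=
          pow_le_pow_left₀ (by linarith) (by linarith) _
      _ ≤ q ^ E :=
          pow_le_pow_right₀ hq (Nat.div_le_div_right (Nat.mul_le_mul (by omega) (by omega)))
  calc _ ≤ 1 * q ^ E + ∑ r ∈ Icc 1 (m - 2), (m.choose r : ℝ) * q ^ E :=
        add_le_add (by simpa using one_le_pow₀ hq) (sum_le_sum hterm)
    _ = ((1 + ∑ r ∈ Icc 1 (m - 2), m.choose r : ℕ) : ℝ) * q ^ E := by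
        push_cast; rw [add_mul, sum_mul]
    _ ≤ 2 ^ m * q ^ E := by
        gcongr
        exact_mod_cast one_add_sum_choose_Icc_le_two_pow m

lemma muBound_div_pow_mem_Icc (m d : ℕ) :
    muBound m d / ((2 : ℝ) ^ d) ^ (m * (m - 1) / 2)
      ∈ Set.Icc (1 - 2 * (2 / 2 ^ d) ^ (m - 1)) 1 := by
  set q : ℝ := 2 ^ d
  set S := ∑ r ∈ Icc 1 (m - 2), (m.choose r : ℝ) * (q - 1) ^ ((m - r) * (m - r - 1) / 2)
  have hq : 1 ≤ q := one_le_pow₀ one_le_two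
  have hS : 0 ≤ S := sum_nonneg fun r _ => mul_nonneg (by positivity) (pow_nonneg (by linarith) _)
  have hpos : 0 < q ^ (m * (m - 1) / 2) := by positivity
  have hmu : muBound m d / q ^ (m * (m - 1) / 2) = 1 - (1 + S) / q ^ (m * (m - 1) / 2) := by
    rw [muBound, pow_mul]; field_simp; ring
  have hupper : (1 + S) / q ^ (m * (m - 1) / 2) ≤ 2 * (2 / q) ^ (m - 1) :=
    calc (1 + S) / q ^ (m * (m - 1) / 2)
        ≤ 2 ^ m * q ^ ((m - 1) * (m - 2) / 2) / (q ^ ((m - 1) * (m - 2) / 2) * q ^ (m - 1)) := by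
          rw [← pow_add, ← mul_pred_div_two_eq]
          exact div_le_div_of_nonneg_right (one_add_sum_choose_mul_pow_le hq m) hpos.le
      _ = 2 ^ m / q ^ (m - 1) := by rw [mul_comm (2 ^ m : ℝ), mul_div_mul_left _ _ (by positivity)]
      _ ≤ 2 * 2 ^ (m - 1) / q ^ (m - 1) := by
          gcongr
          rw [← pow_succ']
          exact pow_le_pow_right₀ one_le_two (by omega)
      _ = 2 * (2 / q) ^ (m - 1) := by rw [div_pow, mul_div_assoc]
  rw [hmu]
  constructor
  · linarith
  · have : 0 ≤ (1 + S) / q ^ (m * (m - 1) / 2) := by positivity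
    linarith

noncomputable def oddCorrection (m d : ℕ) : ℝ :=
  if Even m then 1 else 1 - (2 / 2 ^ d) ^ (m - 1)

lemma oddCorrection_mem_Icc (m d : ℕ) :
    oddCorrection m d ∈ Set.Icc (1 - (2 / 2 ^ d) ^ (m - 1)) 1 := by
  have : (0 : ℝ) ≤ (2 / 2 ^ d) ^ (m - 1) := by positivity
  unfold oddCorrection
  split_ifs <;> constructor <;> linarith

lemma nuBound_eq (m d : ℕ) :
    nuBound m d = ((2 : ℝ) ^ d) ^ (m * (m - 1) / 2) * oddCorrection m d
      * ∏ j ∈ Icc 1 (m / 2), (1 - ((2 : ℝ) ^ d) ^ ((1 : ℤ) - 2 * (j : ℤ))) := by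
  unfold nuBound oddCorrection
  split_ifs with hm
  · rw [mul_one]
  · have hdiv : (m - 1) / 2 = m / 2 := by
      obtain ⟨k, rfl⟩ := Nat.not_even_iff_odd.mp hm
      omega
    rw [hdiv, mul_pred_div_two_eq, pow_add, pow_mul, div_pow]
    field_simp

lemma multipliable_inv_one_sub {κ : Type*} {x : κ → ℝ} (hx : Summable x) (hx1 : ∀ j, x j < 1) :
    Multipliable fun j => (1 - x j)⁻¹ := by
  refine Real.multipliable_of_summable_log (fun j => by simpa using hx1 j) ?_
  simpa [Real.log_inv, sub_eq_add_neg] using (Real.summable_log_one_add_of_summable hx.neg).neg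

lemma tendsto_inv_prod_one_sub_zpow {q : ℝ} (hq : 1 < q) :
    Tendsto (fun k : ℕ => (∏ j ∈ Icc 1 k, (1 - q ^ ((1 : ℤ) - 2 * (j : ℤ))))⁻¹) atTop
      (𝓝 (∏' j : ℕ, (1 - q ^ ((1 : ℤ) - 2 * ((j : ℤ) + 1)))⁻¹)) := by
  have hq0 : 0 < q := one_pos.trans hq
  have hgeom : ∀ j : ℕ, q ^ ((1 : ℤ) - 2 * ((j : ℤ) + 1)) = q⁻¹ * (q ^ 2)⁻¹ ^ j := by
    intro j
    rw [show (1 : ℤ) - 2 * ((j : ℤ) + 1) = -1 + (-2) * (j : ℤ) by ring, zpow_add₀ hq0.ne',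
      zpow_mul, zpow_neg_one, zpow_neg, zpow_natCast, zpow_ofNat]
  have hsum : Summable fun j : ℕ => q ^ ((1 : ℤ) - 2 * ((j : ℤ) + 1)) := by
    simp only [hgeom]
    exact (summable_geometric_of_lt_one (by positivity)
      (inv_lt_one_of_one_lt₀ (one_lt_pow₀ hq two_ne_zero))).mul_left _
  have hlt : ∀ j : ℕ, q ^ ((1 : ℤ) - 2 * ((j : ℤ) + 1)) < 1 := fun j =>
    zpow_lt_one_of_neg₀ hq (by omega)
  refine ((multipliable_inv_one_sub hsum hlt).hasProd.tendsto_prod_nat).congr fun k => ?_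
  have h := prod_Ico_add' (fun j : ℕ => (1 - q ^ ((1 : ℤ) - 2 * (j : ℤ)))⁻¹) 0 k 1
  rw [← prod_inv_distrib, range_eq_Ico, ← Ico_add_one_right_eq_Icc]
  simpa using h

section Limits

variable {ι : Type*} {l : Filter ι} {m d : ι → ℕ}

lemma tendsto_prod_one_sub_zpow {q : ι → ℝ} (hq : Tendsto q l atTop) (k : ℕ) :
    Tendsto (fun i => ∏ j ∈ Icc 1 k, (1 - q i ^ ((1 : ℤ) - 2 * (j : ℤ)))) l (𝓝 1) := by
  simpa using tendsto_finsetProd (Icc 1 k) fun j hj =>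
    ((tendsto_zpow_atTop_zero (by have := (mem_Icc.mp hj).1; omega)).comp hq).const_sub 1

lemma tendsto_muBound_div_pow (ht : Tendsto (fun i => (2 / (2 : ℝ) ^ d i) ^ (m i - 1)) l (𝓝 0)) :
    Tendsto (fun i => muBound (m i) (d i) / ((2 : ℝ) ^ d i) ^ (m i * (m i - 1) / 2)) l (𝓝 1) :=
  tendsto_of_tendsto_of_tendsto_of_le_of_le (by simpa using (ht.const_mul 2).const_sub 1)
    tendsto_const_nhds (fun i => (muBound_div_pow_mem_Icc _ _).1)
    (fun i => (muBound_div_pow_mem_Icc _ _).2)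

lemma tendsto_oddCorrection (ht : Tendsto (fun i => (2 / (2 : ℝ) ^ d i) ^ (m i - 1)) l (𝓝 0)) :
    Tendsto (fun i => oddCorrection (m i) (d i)) l (𝓝 1) :=
  tendsto_of_tendsto_of_tendsto_of_le_of_le (by simpa using ht.const_sub 1)
    tendsto_const_nhds (fun i => (oddCorrection_mem_Icc _ _).1)
    (fun i => (oddCorrection_mem_Icc _ _).2)

lemma tendsto_muBound_div_nuBound {L : ℝ}
    (ht : Tendsto (fun i => (2 / (2 : ℝ) ^ d i) ^ (m i - 1)) l (𝓝 0))
    (hP : Tendsto (fun i =>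
      (∏ j ∈ Icc 1 (m i / 2), (1 - ((2 : ℝ) ^ d i) ^ ((1 : ℤ) - 2 * (j : ℤ))))⁻¹) l (𝓝 L)) :
    Tendsto (fun i => muBound (m i) (d i) / nuBound (m i) (d i)) l (𝓝 L) := by
  have h := ((tendsto_muBound_div_pow ht).div (tendsto_oddCorrection ht) one_ne_zero).mul hP
  rw [div_one, one_mul] at h
  refine h.congr fun i => ?_
  rw [nuBound_eq]
  simp only [Pi.div_apply, div_eq_mul_inv, mul_inv]
  ring

end Limits

/-- With `q = 2^d` fixed (`d ≥ 2`), `μ(n,d)/ν(n,d) → ∏_{j=1}^∞ 1/(1-q^{1-2j})`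
as `n → ∞`; and for `n` fixed (`n ≥ 2`), `μ(n,d)/ν(n,d) → 1` as `d → ∞`. -/
theorem stmt15 (d : ℕ) (hd : 2 ≤ d) (n : ℕ) (hn : 2 ≤ n) :
    Filter.Tendsto (fun m : ℕ => muBound m d / nuBound m d) Filter.atTop
      (nhds (∏' j : ℕ, (1 - ((2 : ℝ) ^ d) ^ ((1 : ℤ) - 2 * ((j : ℤ) + 1)))⁻¹)) ∧
    Filter.Tendsto (fun e : ℕ => muBound n e / nuBound n e) Filter.atTop (nhds 1) := by
  constructor
  · have hlt : (2 : ℝ) / 2 ^ d < 1 := by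
      rw [div_lt_one (by positivity)]
      exact lt_of_eq_of_lt (pow_one 2).symm (pow_lt_pow_right₀ one_lt_two (by omega))
    refine tendsto_muBound_div_nuBound (m := id) (d := fun _ => d) ?_ ?_
    · exact (tendsto_pow_atTop_nhds_zero_of_lt_one (by positivity) hlt).comp
        (tendsto_sub_atTop_nat 1)
    · exact (tendsto_inv_prod_one_sub_zpow (one_lt_two.trans_le (le_self_pow₀ one_le_two
        (by omega)))).comp (Nat.tendsto_div_const_atTop two_ne_zero)
  · have hpow : Tendsto (fun e : ℕ => (2 : ℝ) ^ e) atTop atTop :=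
      tendsto_pow_atTop_atTop_of_one_lt one_lt_two
    refine tendsto_muBound_div_nuBound (m := fun _ => n) (d := id) ?_ ?_
    · simpa [zero_pow (show n - 1 ≠ 0 by omega)] using
        (tendsto_const_nhds.div_atTop hpow).pow (n - 1)
    · simpa using (tendsto_prod_one_sub_zpow hpow (n / 2)).inv₀ one_ne_zero
end

section
/- Let T_∘ ⊆ AGL(V,+) with τ_x = κ_x σ_x for each x, and let λ ∈ GL(V,+). Then λ ∈ GL(V,∘) if and only if κ_x λ = λ κ_{xλ} for all x ∈ V. -/
theorem AddHom.forall_map_twisted_add_iff {M : Type*} [AddRightCancelSemigroup M]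
    (f : AddHom M M) (κ : M → M → M) :
    (∀ x y, f (κ y x + y) = κ (f y) (f x) + f y) ↔ ∀ x y, f (κ y x) = κ (f y) (f x) :=
  forall₂_congr fun _ y => by rw [map_add, add_left_inj]

/-- With `x ∘ y = κ_y x + y` (`κ_y ∈ GL(V,+)` the linear part of the
translation `τ_y ∈ T∘ ⊆ AGL(V,+)`) and `f ∈ GL(V,+)`, one has `f ∈ GL(V,∘)` iff
`κ_x f = f κ_{x f}` for all `x`, i.e. `f (κ_y x) = κ_{f y} (f x)` for all `x, y`. -/
theorem stmt18 (N : ℕ)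
    (circ : (Fin N → ZMod 2) → (Fin N → ZMod 2) → (Fin N → ZMod 2))
    (κ : (Fin N → ZMod 2) → ((Fin N → ZMod 2) ≃ₗ[ZMod 2] (Fin N → ZMod 2)))
    (hκ : ∀ x y, circ x y = κ y x + y)
    (f : (Fin N → ZMod 2) ≃ₗ[ZMod 2] (Fin N → ZMod 2)) :
    (∀ x y, f (circ x y) = circ (f x) (f y)) ↔
    (∀ x y, f (κ y x) = κ (f y) (f x)) := by
  simp only [hκ]
  exact f.toAddHom.forall_map_twisted_add_iff fun y x => κ y x
end

section
/- Let V = (F_2)^{n+d}, n ≥ 2, d ≥ 1, T_∘ ⊆ AGL(V,+) a practical hidden sum with U(T_∘) = Span{e_{n+1},…,e_{n+d}}, and λ ∈ GL(V,+). Then λ ∈ GL(V,+) ∩ GL(V,∘) if and only if λ has block form [[Λ₁, Λ₂],[0, Λ₃]] with Λ₁ ∈ GL_n(F_2), Λ₃ ∈ GL_d(F_2), Λ₂ ∈ (F_2)^{n×d} arbitrary, and B_x Λ₃ = Λ₁ B_{xλ} for all x ∈ V. -/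
/-!
A linear `f` with matrix `M` (acting on row vectors) is `∘`-linear iff it conjugates translations:
`κ_y M = M κ_{yM}` for every `y`. Since `f` is `∘`-linear it permutes the translations of `T∘`
that are ordinary translations, so it preserves `U(T∘) = Span{e_{n+1},…,e_{n+d}}`; this kills the
lower-left block of `M`. For `M = [[Λ₁, Λ₂],[0, Λ₃]]` and `κ_y = [[I, B_y],[0, I]]` both sides of
the conjugation relation are block upper triangular with the same diagonal blocks, and comparing
the upper-right blocks gives `Λ₂ + B_y Λ₃ = Λ₁ B_{yM} + Λ₂`.
-/

open Matrix

/-- The block matrix `[[A, B],[C, D]]` with blocks of sizes `n` and `d`, as an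
`(n+d) × (n+d)` matrix. -/
def blockMat (n d : ℕ) (A : Matrix (Fin n) (Fin n) (ZMod 2))
    (B : Matrix (Fin n) (Fin d) (ZMod 2)) (C : Matrix (Fin d) (Fin n) (ZMod 2))
    (D : Matrix (Fin d) (Fin d) (ZMod 2)) :
    Matrix (Fin (n + d)) (Fin (n + d)) (ZMod 2) :=
  (Matrix.fromBlocks A B C D).submatrix finSumFinEquiv.symm finSumFinEquiv.symm

section BlockMatrix

variable {n d : ℕ}

lemma blockMat_mul (A A' : Matrix (Fin n) (Fin n) (ZMod 2))
    (B B' : Matrix (Fin n) (Fin d) (ZMod 2)) (C C' : Matrix (Fin d) (Fin n) (ZMod 2))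
    (D D' : Matrix (Fin d) (Fin d) (ZMod 2)) :
    blockMat n d A B C D * blockMat n d A' B' C' D' =
      blockMat n d (A * A' + B * C') (A * B' + B * D') (C * A' + D * C') (C * B' + D * D') := by
  rw [blockMat, blockMat, submatrix_mul_equiv, fromBlocks_multiply, blockMat]

lemma blockMat_inj {A A' : Matrix (Fin n) (Fin n) (ZMod 2)}
    {B B' : Matrix (Fin n) (Fin d) (ZMod 2)} {C C' : Matrix (Fin d) (Fin n) (ZMod 2)}
    {D D' : Matrix (Fin d) (Fin d) (ZMod 2)} :
    blockMat n d A B C D = blockMat n d A' B' C' D' ↔ A = A' ∧ B = B' ∧ C = C' ∧ D = D' := by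
  rw [blockMat, blockMat, ← reindex_apply, ← reindex_apply, EmbeddingLike.apply_eq_iff_eq,
    fromBlocks_inj]

lemma exists_blockMat_eq (M : Matrix (Fin (n + d)) (Fin (n + d)) (ZMod 2)) :
    ∃ A B C D, blockMat n d A B C D = M := by
  let M' := M.submatrix finSumFinEquiv finSumFinEquiv
  refine ⟨M'.toBlocks₁₁, M'.toBlocks₁₂, M'.toBlocks₂₁, M'.toBlocks₂₂, ?_⟩
  rw [blockMat, fromBlocks_toBlocks, submatrix_submatrix]
  simp

lemma det_blockMat_zero (A : Matrix (Fin n) (Fin n) (ZMod 2))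
    (B : Matrix (Fin n) (Fin d) (ZMod 2)) (D : Matrix (Fin d) (Fin d) (ZMod 2)) :
    (blockMat n d A B 0 D).det = A.det * D.det := by
  rw [blockMat, det_submatrix_equiv_self, det_fromBlocks_zero₂₁]

lemma blockMat_lowerLeft_eq_zero {A : Matrix (Fin n) (Fin n) (ZMod 2)}
    {B : Matrix (Fin n) (Fin d) (ZMod 2)} {C : Matrix (Fin d) (Fin n) (ZMod 2)}
    {D : Matrix (Fin d) (Fin d) (ZMod 2)}
    (h : ∀ y : Fin (n + d) → ZMod 2, (∀ i : Fin (n + d), (i : ℕ) < n → y i = 0) →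
      ∀ i : Fin (n + d), (i : ℕ) < n → (y ᵥ* blockMat n d A B C D) i = 0) :
    C = 0 := by
  ext i j
  have hsingle : ∀ k : Fin (n + d), (k : ℕ) < n →
      (Pi.single (Fin.natAdd n i) 1 : Fin (n + d) → ZMod 2) k = 0 := by
    intro k hk
    apply Pi.single_eq_of_ne
    rintro rfl
    simp at hk
  simpa [blockMat] using h _ hsingle (Fin.castAdd d j) (by simp)

lemma unitriangular_mul_eq_mul_unitriangular_iff (X Y : Matrix (Fin n) (Fin d) (ZMod 2))
    (A : Matrix (Fin n) (Fin n) (ZMod 2)) (B : Matrix (Fin n) (Fin d) (ZMod 2))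
    (D : Matrix (Fin d) (Fin d) (ZMod 2)) :
    blockMat n d 1 X 0 1 * blockMat n d A B 0 D = blockMat n d A B 0 D * blockMat n d 1 Y 0 1 ↔
      X * D = A * Y := by
  simp [blockMat_mul, blockMat_inj, add_comm B]

end BlockMatrix

lemma apply_map_eq_add_of_apply_eq_add {V : Type*} [AddCommGroup V] (τ : V → Equiv.Perm V)
    (f : V ≃+ V) (hf : ∀ x y, f (τ y x) = τ (f y) (f x)) {v : V} (hv : ∀ x, τ v x = x + v) (z : V) :
    τ (f v) z = z + f v := by
  obtain ⟨x, rfl⟩ := f.surjective z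
  rw [← hf, hv, map_add]

lemma map_translation_iff_mul_eq_mul {ι R : Type*} [Fintype ι] [CommRing R]
    (τ : (ι → R) → Equiv.Perm (ι → R)) (κ : (ι → R) → Matrix ι ι R)
    (hτ : ∀ v x, τ v x = x ᵥ* κ v + v) (f : (ι → R) → ι → R) (M : Matrix ι ι R)
    (hf : ∀ x, f x = x ᵥ* M) :
    (∀ x y, f (τ y x) = τ (f y) (f x)) ↔ ∀ y, κ y * M = M * κ (f y) := by
  simp only [hτ, hf, add_vecMul, add_left_inj, ext_iff_vecMul, vecMul_vecMul]
  exact forall_comm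

theorem stmt19_general (n d : ℕ)
    (τ : (Fin (n + d) → ZMod 2) → Equiv.Perm (Fin (n + d) → ZMod 2))
    (B : (Fin (n + d) → ZMod 2) → Matrix (Fin n) (Fin d) (ZMod 2))
    (hB : ∀ v x, τ v x = x ᵥ* blockMat n d 1 (B v) 0 1 + v)
    (hU : {v : Fin (n + d) → ZMod 2 | ∀ x, τ v x = x + v}
      = {v : Fin (n + d) → ZMod 2 | ∀ i : Fin (n + d), (i : ℕ) < n → v i = 0})
    (f : (Fin (n + d) → ZMod 2) ≃ₗ[ZMod 2] (Fin (n + d) → ZMod 2)) :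
    (∀ x y, f (τ y x) = τ (f y) (f x)) ↔
    (∃ (Λ₁ : Matrix (Fin n) (Fin n) (ZMod 2)) (Λ₂ : Matrix (Fin n) (Fin d) (ZMod 2))
        (Λ₃ : Matrix (Fin d) (Fin d) (ZMod 2)),
      IsUnit Λ₁.det ∧ IsUnit Λ₃.det ∧
      (∀ x, f x = x ᵥ* blockMat n d Λ₁ Λ₂ 0 Λ₃) ∧
      (∀ x : Fin (n + d) → ZMod 2, B x * Λ₃ = Λ₁ * B (f x))) := by
  have hom_iff := map_translation_iff_mul_eq_mul τ (fun v => blockMat n d 1 (B v) 0 1) hB f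
  constructor
  · intro hf
    let M := (LinearMap.toMatrix' f.toLinearMap)ᵀ
    obtain ⟨Λ₁, Λ₂, C, Λ₃, hM⟩ := exists_blockMat_eq M
    have hfM : ∀ x, f x = x ᵥ* blockMat n d Λ₁ Λ₂ C Λ₃ := fun x => by
      simp [hM, M, vecMul_transpose]
    have hUiff := Set.ext_iff.mp hU
    have hC : C = 0 := blockMat_lowerLeft_eq_zero fun y hy => by
      rw [← hfM]
      exact (hUiff _).1 (apply_map_eq_add_of_apply_eq_add τ f.toAddEquiv hf ((hUiff y).2 hy))
    subst hC
    obtain ⟨hΛ₁, hΛ₃⟩ : IsUnit Λ₁.det ∧ IsUnit Λ₃.det := by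
      rw [← IsUnit.mul_iff, ← det_blockMat_zero, hM, det_transpose, LinearMap.det_toMatrix']
      exact f.isUnit_det'
    refine ⟨Λ₁, Λ₂, Λ₃, hΛ₁, hΛ₃, hfM, fun y => ?_⟩
    exact (unitriangular_mul_eq_mul_unitriangular_iff ..).1 ((hom_iff _ hfM).1 hf y)
  · rintro ⟨Λ₁, Λ₂, Λ₃, -, -, hfΛ, hrel⟩
    exact (hom_iff _ hfΛ).2 fun y => (unitriangular_mul_eq_mul_unitriangular_iff ..).2 (hrel y)

/-- For a practical hidden sum `T∘` with `U(T∘) = Span{e_{n+1},…,e_{n+d}}`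
(so `τ_v : x ↦ x κ_v + v` with `κ_v = [[I_n, B_v],[0, I_d]]`), a map `f ∈ GL(V,+)` lies in
`GL(V,+) ∩ GL(V,∘)` iff it has block form `[[Λ₁, Λ₂],[0, Λ₃]]` with `Λ₁ ∈ GL_n(F₂)`,
`Λ₃ ∈ GL_d(F₂)`, `Λ₂` arbitrary, and `B_x Λ₃ = Λ₁ B_{x f}` for all `x ∈ V`.
(Here `x ∘ y = τ_y x` and maps act on row vectors on the right.) -/
theorem stmt19 (n d : ℕ) (hn : 2 ≤ n) (hd : 1 ≤ d)
    (T : Subgroup (Equiv.Perm (Fin (n + d) → ZMod 2)))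
    (haff : ∀ g ∈ T, ∃ (L : (Fin (n + d) → ZMod 2) ≃ₗ[ZMod 2] (Fin (n + d) → ZMod 2))
      (c : Fin (n + d) → ZMod 2), ∀ x, g x = L x + c)
    (hreg : ∀ x y : Fin (n + d) → ZMod 2,
      ∃! g : Equiv.Perm (Fin (n + d) → ZMod 2), g ∈ T ∧ g x = y)
    (hab : ∀ g ∈ T, ∀ h ∈ T, g * h = h * g)
    (helem : ∀ g ∈ T, g * g = 1)
    (τ : (Fin (n + d) → ZMod 2) → Equiv.Perm (Fin (n + d) → ZMod 2))
    (hτmem : ∀ a, τ a ∈ T) (hτ0 : ∀ a, τ a 0 = a)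
    (B : (Fin (n + d) → ZMod 2) → Matrix (Fin n) (Fin d) (ZMod 2))
    (hB : ∀ v x, τ v x = x ᵥ* blockMat n d 1 (B v) 0 1 + v)
    (hU : {v : Fin (n + d) → ZMod 2 | ∀ x, τ v x = x + v}
      = {v : Fin (n + d) → ZMod 2 | ∀ i : Fin (n + d), (i : ℕ) < n → v i = 0})
    (f : (Fin (n + d) → ZMod 2) ≃ₗ[ZMod 2] (Fin (n + d) → ZMod 2)) :
    (∀ x y, f (τ y x) = τ (f y) (f x)) ↔
    (∃ (Λ₁ : Matrix (Fin n) (Fin n) (ZMod 2)) (Λ₂ : Matrix (Fin n) (Fin d) (ZMod 2))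
        (Λ₃ : Matrix (Fin d) (Fin d) (ZMod 2)),
      IsUnit Λ₁.det ∧ IsUnit Λ₃.det ∧
      (∀ x, f x = x ᵥ* blockMat n d Λ₁ Λ₂ 0 Λ₃) ∧
      (∀ x : Fin (n + d) → ZMod 2, B x * Λ₃ = Λ₁ * B (f x))) :=
  stmt19_general n d τ B hB hU f
end
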